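/- arXiv:2111.08332 — 11 statements merged into one kernel-verified Lean document; each statement's English description precedes it below -/
import Mathlib

section
/- Let n be a positive integer, n_p a positive integer, and for k = 0, ..., n-1 let a_k, b_k : ℝ^{n_p} → ℝ be continuous functions. For p ∈ ℝ^{n_p} and τ ≥ 0 define the quasipolynomial Δ(λ; p, τ) = λ^n + Σ_{k=0}^{n-1} a_k(p) λ^k + (Σ_{k=0}^{n-1} b_k(p) λ^k) e^{-λτ}. Suppose λ0 ∈ ℂ is a root of multiplicity k ≥ 1 of Δ(·; p0, τ0) for some p0 ∈ ℝ^{n_p} and τ0 ≥ 0. Then there exists ε̄ > 0 such that for every 0 < ε < ε̄ there exists δ_ε > 0 such that for every p ∈ ℝ^{n_p} and τ ≥ 0 with ‖p - p0‖ < δ_ε and |τ - τ0| < δ_ε, the set of zeros of Δ(·; p, τ) in the open disc {λ ∈ ℂ : |λ - λ0| < ε} is finite and the sum of the multiplicities of these zeros equals k. -/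
/-!
For parameters `q = (p, τ)` near `q₀ = (p0, τ0)`, the function `Δ(·; q)` does not vanish on a
small circle `|λ - λ0| = ε` around the isolated root `λ0`, so by the argument principle the number
of its zeros inside, counted with multiplicity, is `(2πi)⁻¹ ∮ Δ'/Δ`. The integrand depends
continuously on `q` (the λ-derivative does so by Cauchy's formula), hence so does this
natural number, which is therefore constant near `q₀`, equal to `k`.
-/

open Metric Set Filter Topology Complex Real

theorem AnalyticAt.exists_pos_forall_mem_ball_eq_zero_imp_eq {𝕜 E : Type*}
    [NontriviallyNormedField 𝕜] [NormedAddCommGroup E] [NormedSpace 𝕜 E] {f : 𝕜 → E} {z₀ : 𝕜}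
    (hf : AnalyticAt 𝕜 f z₀) (h : analyticOrderAt f z₀ ≠ ⊤) :
    ∃ ε > 0, ∀ z ∈ ball z₀ ε, f z = 0 → z = z₀ := by
  have hne := hf.eventually_eq_zero_or_eventually_ne_zero.resolve_left
    (by rwa [← analyticOrderAt_eq_top])
  obtain ⟨ε, hε, hball⟩ := Metric.eventually_nhds_iff_ball.mp (eventually_nhdsWithin_iff.mp hne)
  exact ⟨ε, hε, fun z hz hfz => by_contra fun hzne => hball z hz hzne hfz⟩

namespace Differentiable

variable {f : ℂ → ℂ} {z₀ : ℂ}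

theorem analyticOrderAt_ne_top (hf : Differentiable ℂ f) (h : f z₀ ≠ 0) (z : ℂ) :
    analyticOrderAt f z ≠ ⊤ := by
  rw [ne_eq, AnalyticOnNhd.analyticOrderAt_eq_top_iff_eq_zero z hf.analyticAt]
  rintro rfl
  exact h rfl

theorem analyticOrderNatAt_eq_zero_iff (hf : Differentiable ℂ f) (h : f z₀ ≠ 0) (z : ℂ) :
    analyticOrderNatAt f z = 0 ↔ f z ≠ 0 := by
  rw [analyticOrderNatAt, ENat.toNat_eq_zero, or_iff_left (hf.analyticOrderAt_ne_top h z),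
    (hf.analyticAt z).analyticOrderAt_eq_zero]

theorem iteratedDeriv_analyticOrderNatAt (hf : Differentiable ℂ f) (h : f z₀ ≠ 0) (z : ℂ) :
    (∀ j < analyticOrderNatAt f z, iteratedDeriv j f z = 0) ∧
      iteratedDeriv (analyticOrderNatAt f z) f z ≠ 0 :=
  (analyticOrderAt_eq_nat_iff_iteratedDeriv_eq_zero (hf.analyticAt z)).mp
    (Nat.cast_analyticOrderNatAt (hf.analyticOrderAt_ne_top h z)).symm

theorem analyticAt_logDeriv (hf : Differentiable ℂ f) (hz : f z₀ ≠ 0) :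
    AnalyticAt ℂ (logDeriv f) z₀ :=
  (hf.analyticAt z₀).deriv.div (hf.analyticAt z₀) hz

theorem finite_zeros_of_isCompact (hf : Differentiable ℂ f) (h : f z₀ ≠ 0) {K : Set ℂ}
    (hK : IsCompact K) : {z | z ∈ K ∧ f z = 0}.Finite := by
  have hcodiscrete : f ⁻¹' {0}ᶜ ∈ codiscreteWithin K :=
    codiscreteWithin_mono (subset_univ K)
      (AnalyticOnNhd.preimage_zero_mem_codiscrete (fun z _ => hf.analyticAt z) h)
  exact (hK.finite_sdiff_of_mem_codiscreteWithin hcodiscrete).subset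
    fun z hz => ⟨hz.1, not_not.mpr hz.2⟩

end Differentiable

theorem analyticOrderNatAt_sub_const (w z : ℂ) :
    analyticOrderNatAt (· - w) z = if z = w then 1 else 0 := by
  split_ifs with h <;> simp [analyticOrderNatAt, h]

theorem eq_sub_mul_dslope {𝕜 : Type*} [NontriviallyNormedField 𝕜] {f : 𝕜 → 𝕜} {w : 𝕜}
    (hw : f w = 0) :
    f = fun z => (z - w) * dslope f w z := by
  ext z
  rw [← smul_eq_mul, sub_smul_dslope, hw, sub_zero]

theorem circleIntegral_logDeriv_eq_zero {f : ℂ → ℂ} {c : ℂ} {r : ℝ} (hr : 0 ≤ r)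
    (hf : Differentiable ℂ f) (hne : ∀ z ∈ closedBall c r, f z ≠ 0) :
    ∮ z in C(c, r), logDeriv f z = 0 :=
  Complex.circleIntegral_eq_zero_of_differentiable_on_off_countable hr countable_empty
    (fun z hz => (hf.analyticAt_logDeriv (hne z hz)).continuousAt.continuousWithinAt)
    fun z hz => (hf.analyticAt_logDeriv (hne z (ball_subset_closedBall hz.1))).differentiableAt

theorem circleIntegral_logDeriv_eq_sum_analyticOrderNatAt {f : ℂ → ℂ} {c : ℂ} {r : ℝ}
    (hr : 0 < r) (hf : Differentiable ℂ f) (hsphere : ∀ z ∈ sphere c r, f z ≠ 0)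
    {S : Finset ℂ} (hS : ↑S ⊆ ball c r) (hzeros : ∀ z ∈ ball c r, f z = 0 → z ∈ S) :
    ∮ z in C(c, r), logDeriv f z = 2 * π * I * ∑ z ∈ S, analyticOrderNatAt f z := by
  have hpt : c + r ∈ sphere c r := by simp [abs_of_pos hr]
  generalize hN : ∑ z ∈ S, analyticOrderNatAt f z = N
  induction N generalizing f with
  | zero =>
    have hne : ∀ z ∈ closedBall c r, f z ≠ 0 := by
      intro z hz
      rcases (mem_closedBall.mp hz).lt_or_eq with hz | hz
      · intro hfz
        exact (hf.analyticOrderNatAt_eq_zero_iff (hsphere _ hpt) z).mp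
          (Finset.sum_eq_zero_iff.mp hN z (hzeros z (mem_ball.mpr hz) hfz)) hfz
      · exact hsphere z (mem_sphere.mpr hz)
    simp [circleIntegral_logDeriv_eq_zero hr.le hf hne]
  | succ N ih =>
    obtain ⟨w, hwS, hw⟩ : ∃ w ∈ S, analyticOrderNatAt f w ≠ 0 := by
      by_contra! h
      simp [Finset.sum_eq_zero h] at hN
    have hwball : w ∈ ball c r := hS hwS
    set g := dslope f w
    have hfg : f = fun z => (z - w) * g z :=
      eq_sub_mul_dslope (apply_eq_zero_of_analyticOrderNatAt_ne_zero hw)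
    have hg : Differentiable ℂ g := by
      rw [← differentiableOn_univ, differentiableOn_dslope univ_mem]
      exact hf.differentiableOn
    have hgsphere : ∀ z ∈ sphere c r, g z ≠ 0 := fun z hz hgz =>
      hsphere z hz (by rw [congrFun hfg z, hgz, mul_zero])
    have hgzeros : ∀ z ∈ ball c r, g z = 0 → z ∈ S := fun z hz hgz =>
      hzeros z hz (by rw [congrFun hfg z, hgz, mul_zero])
    have hord : ∀ z, analyticOrderNatAt f z =
        (if z = w then 1 else 0) + analyticOrderNatAt g z := by
      intro z
      have hlin : Differentiable ℂ (· - w) := by fun_prop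
      rw [hfg, ← analyticOrderNatAt_sub_const]
      exact analyticOrderNatAt_mul (hlin.analyticAt z) (hg.analyticAt z)
        (hlin.analyticOrderAt_ne_top (z₀ := w + 1) (by simp) z)
        (hg.analyticOrderAt_ne_top (hgsphere _ hpt) z)
    have hsum : ∑ z ∈ S, analyticOrderNatAt g z = N := by
      simp only [hord, Finset.sum_add_distrib, Finset.sum_ite_eq', hwS, if_true] at hN
      omega
    have hzw : ∀ z ∈ sphere c r, z - w ≠ 0 := fun z hz => sub_ne_zero.mpr fun h =>
      (mem_sphere.mp hz ▸ h ▸ mem_ball.mp hwball).false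
    have hlog : ∀ z ∈ sphere c r, logDeriv f z = (z - w)⁻¹ + logDeriv g z := by
      intro z hz
      rw [hfg, logDeriv_mul (f := fun z => z - w) z (hzw z hz) (hgsphere z hz) (by fun_prop)
        (hg z)]
      simp [logDeriv_apply]
    have hint_inv : CircleIntegrable (fun z => (z - w)⁻¹) c r :=
      ContinuousOn.circleIntegrable hr.le fun z hz =>
        ((continuousAt_id.sub continuousAt_const).inv₀ (hzw z hz)).continuousWithinAt
    have hint_g : CircleIntegrable (logDeriv g) c r :=
      ContinuousOn.circleIntegrable hr.le fun z hz =>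
        (hg.analyticAt_logDeriv (hgsphere z hz)).continuousAt.continuousWithinAt
    calc ∮ z in C(c, r), logDeriv f z = ∮ z in C(c, r), ((z - w)⁻¹ + logDeriv g z) :=
          circleIntegral.integral_congr hr.le hlog
      _ = 2 * π * I + 2 * π * I * N := by
          rw [circleIntegral.integral_add hint_inv hint_g,
            circleIntegral.integral_sub_inv_of_mem_ball hwball, ih hg hgsphere hgzeros hsum]
      _ = 2 * π * I * ↑(N + 1) := by push_cast; ring

theorem continuous_circleIntegral_of_continuousAt {X E : Type*} [TopologicalSpace X]
    [NormedAddCommGroup E] [NormedSpace ℂ E] {f : X → ℂ → E} {c : X → ℂ} {R : ℝ}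
    (hc : Continuous c) (hf : ∀ x, ∀ z ∈ sphere (c x) |R|, ContinuousAt ↿f (x, z)) :
    Continuous fun x => ∮ z in C(c x, R), f x z := by
  simp only [circleIntegral, deriv_circleMap]
  apply intervalIntegral.continuous_parametric_intervalIntegral_of_continuous'
  refine continuous_iff_continuousAt.mpr fun ⟨x, θ⟩ => ?_
  have hmap : Continuous fun p : X × ℝ => (p.1, circleMap (c p.1) R p.2) := by
    simp only [circleMap]; fun_prop
  refine ContinuousAt.smul (by fun_prop) ?_
  exact ContinuousAt.comp (f := fun p : X × ℝ => (p.1, circleMap (c p.1) R p.2)) (g := ↿f)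
    (hf x _ (circleMap_mem_sphere' _ _ _)) hmap.continuousAt

theorem continuous_deriv_of_continuous_of_differentiable {X : Type*} [TopologicalSpace X]
    {F : X → ℂ → ℂ} (hF : Continuous ↿F) (hdiff : ∀ x, Differentiable ℂ (F x)) :
    Continuous fun p : X × ℂ => deriv (F p.1) p.2 := by
  have hcauchy : ∀ p : X × ℂ, deriv (F p.1) p.2 =
      (2 * π * I)⁻¹ • ∮ w in C(p.2, 1), (1 / (w - p.2) ^ 2) • F p.1 w := fun p => by
    rw [(hdiff p.1).differentiableOn.deriv_eq_smul_circleIntegral one_pos, smul_smul,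
      inv_mul_cancel₀ two_pi_I_ne_zero, one_smul]
  simp only [hcauchy]
  refine (continuous_circleIntegral_of_continuousAt (X := X × ℂ)
    (f := fun p w => (1 / (w - p.2) ^ 2) • F p.1 w) continuous_snd fun p w hw => ?_).const_smul
      ((2 * π * I)⁻¹ : ℂ)
  have hwz : w - p.2 ≠ 0 := sub_ne_zero.mpr (ne_of_mem_sphere hw (by norm_num))
  have hFc : ContinuousAt (fun x : (X × ℂ) × ℂ => F x.1.1 x.2) (p, w) :=
    (hF.comp (continuous_fst.fst.prodMk continuous_snd)).continuousAt
  exact (continuousAt_const.div ((continuousAt_snd.sub continuousAt_fst.snd).pow 2)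
    (pow_ne_zero 2 hwz)).smul hFc

theorem eventually_forall_mem_ne_zero {X Y Z : Type*} [TopologicalSpace X] [TopologicalSpace Y]
    [TopologicalSpace Z] [T1Space Z] [Zero Z] {F : X → Y → Z} (hF : Continuous ↿F)
    {K : Set Y} (hK : IsCompact K) {x₀ : X} (h : ∀ y ∈ K, F x₀ y ≠ 0) :
    ∀ᶠ x in 𝓝 x₀, ∀ y ∈ K, F x y ≠ 0 :=
  hK.eventually_forall_of_forall_eventually fun y hy =>
    hF.continuousAt.eventually_ne (h y hy)

theorem continuousAt_circleIntegral_logDeriv {X : Type*} [TopologicalSpace X]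
    {F : X → ℂ → ℂ} (hF : Continuous ↿F) (hdiff : ∀ x, Differentiable ℂ (F x)) {x₀ : X}
    {c : ℂ} {R : ℝ} (h : ∀ z ∈ sphere c |R|, F x₀ z ≠ 0) :
    ContinuousAt (fun x => ∮ z in C(c, R), logDeriv (F x) z) x₀ := by
  set U := {x | ∀ z ∈ sphere c |R|, F x z ≠ 0}
  have hU : U ∈ 𝓝 x₀ := eventually_forall_mem_ne_zero hF (isCompact_sphere c |R|) h
  refine ContinuousOn.continuousAt (continuousOn_iff_continuous_domRestrict.mpr ?_) hU
  have hF' := continuous_deriv_of_continuous_of_differentiable hF hdiff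
  refine continuous_circleIntegral_of_continuousAt (f := fun x : U => logDeriv (F x))
    continuous_const fun x z hz => ?_
  have hval : Continuous fun p : U × ℂ => ((p.1 : X), p.2) := by fun_prop
  exact ((hF'.comp hval).continuousAt).div ((hF.comp hval).continuousAt) (x.2 z hz)

theorem eq_of_norm_two_pi_I_mul_sub_lt {m n : ℕ}
    (h : ‖2 * π * I * m - 2 * π * I * n‖ < 2 * π) : m = n := by
  have hmn : |(m : ℝ) - n| < 1 := by
    rw [← mul_sub, norm_mul, ← ofReal_natCast, ← ofReal_natCast, ← ofReal_sub, norm_real,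
      Real.norm_eq_abs, norm_mul, norm_mul, norm_I, mul_one, norm_real, Real.norm_eq_abs,
      abs_of_pos pi_pos, RCLike.norm_two] at h
    nlinarith [pi_pos]
  rw [abs_sub_lt_iff] at hmn
  have h1 : m < n + 1 := by exact_mod_cast (by linarith : (m : ℝ) < n + 1)
  have h2 : n < m + 1 := by exact_mod_cast (by linarith : (n : ℝ) < m + 1)
  omega

theorem eventually_exists_finset_zeros_sum_analyticOrderNatAt_eq {X : Type*}
    [TopologicalSpace X] {F : X → ℂ → ℂ} (hF : Continuous ↿F)
    (hdiff : ∀ x, Differentiable ℂ (F x)) {x₀ : X} {c : ℂ} {r : ℝ} (hr : 0 < r)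
    (hsphere : ∀ z ∈ sphere c r, F x₀ z ≠ 0) {S₀ : Finset ℂ} (hS₀ : ↑S₀ ⊆ ball c r)
    (hzeros₀ : ∀ z ∈ ball c r, F x₀ z = 0 → z ∈ S₀) :
    ∀ᶠ x in 𝓝 x₀, ∃ S : Finset ℂ, ↑S = {z | z ∈ ball c r ∧ F x z = 0} ∧
      ∑ z ∈ S, analyticOrderNatAt (F x) z = ∑ z ∈ S₀, analyticOrderNatAt (F x₀) z := by
  have hpt : c + r ∈ sphere c r := by simp [abs_of_pos hr]
  have hI := continuousAt_circleIntegral_logDeriv hF hdiff (x₀ := x₀) (c := c) (R := r)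
    (by rwa [abs_of_pos hr])
  filter_upwards [eventually_forall_mem_ne_zero hF (isCompact_sphere c r) hsphere,
    hI.eventually (ball_mem_nhds _ two_pi_pos)] with x hx hIx
  have hfin : {z | z ∈ ball c r ∧ F x z = 0}.Finite :=
    ((hdiff x).finite_zeros_of_isCompact (hx _ hpt) (isCompact_closedBall c r)).subset
      fun z hz => ⟨ball_subset_closedBall hz.1, hz.2⟩
  refine ⟨hfin.toFinset, hfin.coe_toFinset, eq_of_norm_two_pi_I_mul_sub_lt ?_⟩
  rw [← circleIntegral_logDeriv_eq_sum_analyticOrderNatAt hr (hdiff x) hx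
      (fun z hz => (hfin.mem_toFinset.mp hz).1) fun z hz hfz => hfin.mem_toFinset.mpr ⟨hz, hfz⟩,
    ← circleIntegral_logDeriv_eq_sum_analyticOrderNatAt hr (hdiff x₀) hsphere hS₀ hzeros₀,
    ← dist_eq_norm]
  exact hIx

theorem stmt_0_general
    (n np : ℕ)
    (a b : Fin n → EuclideanSpace ℝ (Fin np) → ℝ)
    (ha : ∀ k, Continuous (a k)) (hb : ∀ k, Continuous (b k))
    (Δ : EuclideanSpace ℝ (Fin np) → ℝ → ℂ → ℂ)
    (hΔ : ∀ p τ lam, Δ p τ lam =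
      lam ^ n + ∑ k : Fin n, (a k p : ℂ) * lam ^ (k : ℕ)
        + (∑ k : Fin n, (b k p : ℂ) * lam ^ (k : ℕ)) * Complex.exp (-lam * τ))
    (lam0 : ℂ) (p0 : EuclideanSpace ℝ (Fin np)) (τ0 : ℝ)
    (k : ℕ)
    (hroot : ∀ j < k, iteratedDeriv j (Δ p0 τ0) lam0 = 0)
    (hk' : iteratedDeriv k (Δ p0 τ0) lam0 ≠ 0) :
    ∃ εbar > (0 : ℝ), ∀ ε : ℝ, 0 < ε → ε < εbar → ∃ δ > (0 : ℝ),
      ∀ (p : EuclideanSpace ℝ (Fin np)) (τ : ℝ), 0 ≤ τ →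
        ‖p - p0‖ < δ → |τ - τ0| < δ →
        ∃ (S : Finset ℂ) (mult : ℂ → ℕ),
          (↑S = {z : ℂ | ‖z - lam0‖ < ε ∧ Δ p τ z = 0}) ∧
          (∀ z ∈ S, (∀ j < mult z, iteratedDeriv j (Δ p τ) z = 0) ∧
            iteratedDeriv (mult z) (Δ p τ) z ≠ 0) ∧
          (∑ z ∈ S, mult z) = k := by
  set F : EuclideanSpace ℝ (Fin np) × ℝ → ℂ → ℂ := fun q => Δ q.1 q.2
  have hdiff : ∀ q, Differentiable ℂ (F q) := fun q => by
    simp only [F, funext (hΔ q.1 q.2)]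
    fun_prop
  have hcont : Continuous ↿F := by
    show Continuous fun x : (EuclideanSpace ℝ (Fin np) × ℝ) × ℂ => Δ x.1.1 x.1.2 x.2
    simp only [hΔ]
    fun_prop
  have hord : analyticOrderAt (F (p0, τ0)) lam0 = k :=
    (analyticOrderAt_eq_nat_iff_iteratedDeriv_eq_zero ((hdiff _).analyticAt lam0)).mpr
      ⟨hroot, hk'⟩
  obtain ⟨εbar, hεbar, hisol⟩ :=
    ((hdiff (p0, τ0)).analyticAt lam0).exists_pos_forall_mem_ball_eq_zero_imp_eq
      (hord ▸ ENat.natCast_ne_top k)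
  refine ⟨εbar, hεbar, fun ε hε hεε => ?_⟩
  have hsphere : ∀ z ∈ sphere lam0 ε, F (p0, τ0) z ≠ 0 := fun z hz hfz =>
    ne_of_mem_sphere hz hε.ne' (hisol z (sphere_subset_ball hεε hz) hfz)
  have hnear := (eventually_exists_finset_zeros_sum_analyticOrderNatAt_eq hcont hdiff hε hsphere
    (S₀ := {lam0}) (by simpa using hε) fun z hz hfz =>
      Finset.mem_singleton.mpr (hisol z (ball_subset_ball hεε.le hz) hfz)).and
    (eventually_forall_mem_ne_zero hcont (isCompact_sphere lam0 ε) hsphere)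
  obtain ⟨δ, hδ, hδnear⟩ := Metric.eventually_nhds_iff_ball.mp hnear
  refine ⟨δ, hδ, fun p τ _ hp hτ => ?_⟩
  obtain ⟨⟨S, hS, hsum⟩, hq⟩ := hδnear (p, τ) (by
    rw [mem_ball, Prod.dist_eq, max_lt_iff, dist_eq_norm, Real.dist_eq]
    exact ⟨hp, hτ⟩)
  refine ⟨S, analyticOrderNatAt (Δ p τ), by simpa [dist_eq_norm] using hS, fun z _ => ?_, ?_⟩
  · exact (hdiff (p, τ)).iteratedDeriv_analyticOrderNatAt
      (hq (lam0 + ε) (by simp [abs_of_pos hε])) z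
  · rw [Finset.sum_singleton] at hsum
    exact hsum.trans (by simp [analyticOrderNatAt, hord])

/-- Continuity of roots (with multiplicity) of a parameter-dependent
quasipolynomial `Δ(λ; p, τ) = λ^n + Σ a_k(p) λ^k + (Σ b_k(p) λ^k) e^{-λτ}`:
if `lam0` is a root of multiplicity `k` of `Δ(·; p0, τ0)`, then for every sufficiently
small `ε > 0` there is `δ > 0` such that for all nearby parameters `(p, τ)`, the zeros
of `Δ(·; p, τ)` in the disc `|λ - lam0| < ε` form a finite set whose multiplicities sum
to `k`. -/
theorem stmt_0
    (n np : ℕ) (hn : 0 < n) (hnp : 0 < np)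
    (a b : Fin n → EuclideanSpace ℝ (Fin np) → ℝ)
    (ha : ∀ k, Continuous (a k)) (hb : ∀ k, Continuous (b k))
    (Δ : EuclideanSpace ℝ (Fin np) → ℝ → ℂ → ℂ)
    (hΔ : ∀ p τ lam, Δ p τ lam =
      lam ^ n + ∑ k : Fin n, (a k p : ℂ) * lam ^ (k : ℕ)
        + (∑ k : Fin n, (b k p : ℂ) * lam ^ (k : ℕ)) * Complex.exp (-lam * τ))
    (lam0 : ℂ) (p0 : EuclideanSpace ℝ (Fin np)) (τ0 : ℝ) (hτ0 : 0 ≤ τ0)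
    (k : ℕ) (hk : 1 ≤ k)
    (hroot : ∀ j < k, iteratedDeriv j (Δ p0 τ0) lam0 = 0)
    (hk' : iteratedDeriv k (Δ p0 τ0) lam0 ≠ 0) :
    ∃ εbar > (0 : ℝ), ∀ ε : ℝ, 0 < ε → ε < εbar → ∃ δ > (0 : ℝ),
      ∀ (p : EuclideanSpace ℝ (Fin np)) (τ : ℝ), 0 ≤ τ →
        ‖p - p0‖ < δ → |τ - τ0| < δ →
        ∃ (S : Finset ℂ) (mult : ℂ → ℕ),
          (↑S = {z : ℂ | ‖z - lam0‖ < ε ∧ Δ p τ z = 0}) ∧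
          (∀ z ∈ S, (∀ j < mult z, iteratedDeriv j (Δ p τ) z = 0) ∧
            iteratedDeriv (mult z) (Δ p τ) z ≠ 0) ∧
          (∑ z ∈ S, mult z) = k :=
  stmt_0_general n np a b ha hb Δ hΔ lam0 p0 τ0 k hroot hk'
end

section
/- Let N ≥ 0 be an integer, let P_0, ..., P_N be nonzero real polynomials, and let 0 = τ_0 < τ_1 < ... < τ_N be real numbers. Define the quasipolynomial Δ(λ) = Σ_{k=0}^{N} P_k(λ) e^{-λ τ_k}. Then Δ is not identically zero, and every root λ0 ∈ ℂ of Δ has multiplicity at most 𝒟 = N + Σ_{k=0}^{N} deg P_k (the Pólya–Szegő bound). -/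
/-!
Write `Δ(λ) = ∑ₖ Qₖ(λ) e^{cₖ λ}` with pairwise distinct `cₖ`. The operator `f ↦ f' - μ f` sends
`Q(λ) e^{cλ}` to `((D + c - μ) Q)(λ) e^{cλ}`: for `c = μ` this is `Q' e^{cλ}`, so `deg Q + 1`
applications kill the term, while for `c ≠ μ` the polynomial keeps its degree and stays nonzero.
If `f` vanishes to order `n + 1` at `λ₀` then `f' - μ f` vanishes to order `n` there. Hence
`(D - c₀)^{deg Q₀ + 1}` removes one term at the cost of `deg Q₀ + 1` orders of vanishing, and
induction on the number of terms ends with a single term `Q e^{cλ}`, which `(D - c)^{deg Q}` turns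
into a nonzero constant times `e^{cλ}`.
-/

open Polynomial Finset
open scoped ContDiff

namespace Polynomial

variable {R : Type*} [Semiring R]

noncomputable def twistedDerivative (a : R) (Q : R[X]) : R[X] := derivative Q + C a * Q

@[simp]
theorem twistedDerivative_zero : twistedDerivative (0 : R) = derivative := by
  ext1 Q
  simp [twistedDerivative]

theorem natDegree_twistedDerivative_le (a : R) (Q : R[X]) :
    (twistedDerivative a Q).natDegree ≤ Q.natDegree :=
  (natDegree_add_le _ _).trans <|
    max_le ((natDegree_derivative_le Q).trans tsub_le_self) (natDegree_C_mul_le _ _)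

theorem coeff_twistedDerivative_natDegree (a : R) (Q : R[X]) :
    (twistedDerivative a Q).coeff Q.natDegree = a * Q.leadingCoeff := by
  rw [twistedDerivative, coeff_add, coeff_derivative, coeff_C_mul,
    coeff_eq_zero_of_natDegree_lt (Nat.lt_succ_self _), zero_mul, zero_add, leadingCoeff]

theorem iterate_derivative_natDegree (Q : R[X]) :
    derivative^[Q.natDegree] Q = C (Q.natDegree.factorial • Q.leadingCoeff) := by
  ext m
  rw [coeff_iterate_derivative, coeff_C]
  rcases Nat.eq_zero_or_pos m with rfl | hm
  · simp only [zero_add, Nat.descFactorial_self, if_true]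
    rfl
  · rw [coeff_eq_zero_of_natDegree_lt (by omega), smul_zero, if_neg hm.ne']

variable [NoZeroDivisors R] {a : R}

theorem twistedDerivative_ne_zero (ha : a ≠ 0) {Q : R[X]} (hQ : Q ≠ 0) :
    twistedDerivative a Q ≠ 0 := by
  intro h
  have := coeff_twistedDerivative_natDegree a Q
  rw [h, coeff_zero] at this
  exact mul_ne_zero ha (leadingCoeff_ne_zero.mpr hQ) this.symm

theorem natDegree_twistedDerivative (ha : a ≠ 0) (Q : R[X]) :
    (twistedDerivative a Q).natDegree = Q.natDegree := by
  rcases eq_or_ne Q 0 with rfl | hQ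
  · simp [twistedDerivative]
  refine (natDegree_twistedDerivative_le a Q).antisymm (le_natDegree_of_ne_zero ?_)
  rw [coeff_twistedDerivative_natDegree]
  exact mul_ne_zero ha (leadingCoeff_ne_zero.mpr hQ)

theorem iterate_twistedDerivative_ne_zero (ha : a ≠ 0) {Q : R[X]} (hQ : Q ≠ 0) (m : ℕ) :
    (twistedDerivative a)^[m] Q ≠ 0 :=
  Function.Iterate.rec (· ≠ 0) hQ (fun _ => twistedDerivative_ne_zero ha) m

theorem natDegree_iterate_twistedDerivative (ha : a ≠ 0) (Q : R[X]) (m : ℕ) :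
    ((twistedDerivative a)^[m] Q).natDegree = Q.natDegree :=
  Function.Iterate.rec (fun P => P.natDegree = Q.natDegree) rfl
    (fun P hP => (natDegree_twistedDerivative ha P).trans hP) m

theorem eval_iterate_derivative_natDegree_ne_zero [CharZero R] {Q : R[X]} (hQ : Q ≠ 0) (x : R) :
    (derivative^[Q.natDegree] Q).eval x ≠ 0 := by
  rw [iterate_derivative_natDegree, eval_C, nsmul_eq_mul]
  exact mul_ne_zero (Nat.cast_ne_zero.mpr Q.natDegree.factorial_ne_zero)
    (leadingCoeff_ne_zero.mpr hQ)

end Polynomial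

section shiftedDeriv

variable {𝕜 : Type*} [NontriviallyNormedField 𝕜]

noncomputable def shiftedDeriv (μ : 𝕜) (f : 𝕜 → 𝕜) : 𝕜 → 𝕜 := fun z => deriv f z - μ * f z

variable {f : 𝕜 → 𝕜} (μ : 𝕜)

theorem ContDiff.shiftedDeriv (hf : ContDiff 𝕜 ∞ f) : ContDiff 𝕜 ∞ (shiftedDeriv μ f) :=
  (contDiff_infty_iff_deriv.mp hf).2.sub (contDiff_const.mul hf)

theorem deriv_shiftedDeriv (hf : ContDiff 𝕜 ∞ f) :
    deriv (shiftedDeriv μ f) = shiftedDeriv μ (deriv f) := by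
  have hf' := contDiff_infty_iff_deriv.mp hf
  funext z
  change deriv (fun w => deriv f w - μ * f w) z = deriv (deriv f) z - μ * deriv f z
  rw [deriv_fun_sub ((hf'.2.differentiable (by simp)) z)
    ((hf'.1.const_mul μ) z), deriv_const_mul _ (hf'.1 z)]

theorem iteratedDeriv_shiftedDeriv (hf : ContDiff 𝕜 ∞ f) (n : ℕ) :
    iteratedDeriv n (shiftedDeriv μ f) = shiftedDeriv μ (iteratedDeriv n f) := by
  induction n with
  | zero => simp
  | succ n ih =>
    have hn : ContDiff 𝕜 ∞ (iteratedDeriv n f) := by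
      simpa only [iteratedDeriv_eq_iterate] using hf.iterate_deriv n
    rw [iteratedDeriv_succ, ih, deriv_shiftedDeriv μ hn, iteratedDeriv_succ]

theorem iteratedDeriv_shiftedDeriv_eq_zero (hf : ContDiff 𝕜 ∞ f) {z : 𝕜} {n : ℕ}
    (h : ∀ i < n + 1, iteratedDeriv i f z = 0) :
    ∀ i < n, iteratedDeriv i (shiftedDeriv μ f) z = 0 := by
  intro i hi
  rw [iteratedDeriv_shiftedDeriv μ hf, shiftedDeriv, ← iteratedDeriv_succ, h i (by omega),
    h (i + 1) (by omega), mul_zero, sub_zero]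

theorem iteratedDeriv_iterate_shiftedDeriv_eq_zero (hf : ContDiff 𝕜 ∞ f) {z : 𝕜} {n m : ℕ}
    (h : ∀ i < n + m, iteratedDeriv i f z = 0) :
    ∀ i < n, iteratedDeriv i ((shiftedDeriv μ)^[m] f) z = 0 := by
  induction m generalizing f with
  | zero => exact h
  | succ m ih =>
    exact ih (hf.shiftedDeriv μ) (iteratedDeriv_shiftedDeriv_eq_zero μ hf h)

end shiftedDeriv

theorem hasDerivAt_eval_mul_exp (Q : ℂ[X]) (c z : ℂ) :
    HasDerivAt (fun w => Q.eval w * Complex.exp (c * w))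
      ((twistedDerivative c Q).eval z * Complex.exp (c * z)) z := by
  have hexp : HasDerivAt (fun w => Complex.exp (c * w)) (Complex.exp (c * z) * c) z := by
    simpa using ((hasDerivAt_id z).const_mul c).cexp
  refine ((Q.hasDerivAt z).fun_mul hexp).congr_deriv ?_
  simp only [twistedDerivative, eval_add, eval_mul, eval_C]
  ring

section expPoly

variable {ι : Type*}

noncomputable def expPoly (s : Finset ι) (Q : ι → ℂ[X]) (c : ι → ℂ) (z : ℂ) : ℂ :=
  ∑ i ∈ s, (Q i).eval z * Complex.exp (c i * z)

variable (s : Finset ι) (Q : ι → ℂ[X]) (c : ι → ℂ)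

theorem contDiff_expPoly : ContDiff ℂ ∞ (expPoly s Q c) := by
  refine ContDiff.sum fun i _ => ContDiff.mul ?_ (contDiff_const.mul contDiff_id).cexp
  simpa using (Q i).contDiff_aeval (𝕜 := ℂ) ∞

theorem shiftedDeriv_expPoly (μ : ℂ) :
    shiftedDeriv μ (expPoly s Q c) = expPoly s (fun i => twistedDerivative (c i - μ) (Q i)) c := by
  funext z
  have hderiv : HasDerivAt (expPoly s Q c)
      (∑ i ∈ s, (twistedDerivative (c i) (Q i)).eval z * Complex.exp (c i * z)) z :=
    HasDerivAt.fun_sum fun i _ => hasDerivAt_eval_mul_exp (Q i) (c i) z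
  simp only [shiftedDeriv, hderiv.deriv, expPoly, mul_sum, ← sum_sub_distrib]
  refine sum_congr rfl fun i _ => ?_
  simp only [twistedDerivative, eval_add, eval_mul, eval_C]
  ring

theorem iterate_shiftedDeriv_expPoly (μ : ℂ) (m : ℕ) :
    (shiftedDeriv μ)^[m] (expPoly s Q c) =
      expPoly s (fun i => (twistedDerivative (c i - μ))^[m] (Q i)) c := by
  induction m with
  | zero => rfl
  | succ m ih =>
    simp only [Function.iterate_succ_apply', ih, shiftedDeriv_expPoly]

variable {Q c}

theorem iterate_shiftedDeriv_expPoly_singleton_ne_zero {a : ι} (ha : Q a ≠ 0) (z : ℂ) :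
    (shiftedDeriv (c a))^[(Q a).natDegree] (expPoly {a} Q c) z ≠ 0 := by
  rw [iterate_shiftedDeriv_expPoly, expPoly, sum_singleton, sub_self, twistedDerivative_zero]
  exact mul_ne_zero (eval_iterate_derivative_natDegree_ne_zero ha z) (Complex.exp_ne_zero _)

theorem iterate_shiftedDeriv_expPoly_cons {a : ι} {t : Finset ι} (ha : a ∉ t) {m : ℕ}
    (hm : (Q a).natDegree < m) :
    (shiftedDeriv (c a))^[m] (expPoly (cons a t ha) Q c) =
      expPoly t (fun i => (twistedDerivative (c i - c a))^[m] (Q i)) c := by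
  funext z
  rw [iterate_shiftedDeriv_expPoly, expPoly, sum_cons, sub_self, twistedDerivative_zero,
    iterate_derivative_eq_zero hm, eval_zero, zero_mul, zero_add]
  rfl

theorem exists_iteratedDeriv_expPoly_ne_zero {s : Finset ι} (hs : s.Nonempty)
    (hQ : ∀ i ∈ s, Q i ≠ 0) (hc : Set.InjOn c s) (z : ℂ) :
    ∃ j < #s + ∑ i ∈ s, (Q i).natDegree, iteratedDeriv j (expPoly s Q c) z ≠ 0 := by
  induction hs using Finset.Nonempty.cons_induction generalizing Q with
  | singleton a =>
    by_contra! h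
    have hvanish := iteratedDeriv_iterate_shiftedDeriv_eq_zero (c a) (contDiff_expPoly _ Q c)
      (n := 1) (m := (Q a).natDegree) (by simpa [add_comm] using h) 0 one_pos
    rw [iteratedDeriv_zero] at hvanish
    exact iterate_shiftedDeriv_expPoly_singleton_ne_zero (hQ a (mem_singleton_self a)) z hvanish
  | cons a t ha _ ih =>
    by_contra! h
    set d := (Q a).natDegree
    have hca : ∀ i ∈ t, c i - c a ≠ 0 := fun i hi => sub_ne_zero.mpr fun hi' =>
      ha (hc (mem_cons_of_mem hi) (mem_cons_self a t) hi' ▸ hi)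
    obtain ⟨j, hj, hne⟩ := ih (Q := fun i => (twistedDerivative (c i - c a))^[d + 1] (Q i))
      (fun i hi => iterate_twistedDerivative_ne_zero (hca i hi) (hQ i (mem_cons_of_mem hi)) _)
      (hc.mono (by simp))
    rw [sum_congr rfl fun i hi => natDegree_iterate_twistedDerivative (hca i hi) (Q i) _] at hj
    rw [← iterate_shiftedDeriv_expPoly_cons ha (Nat.lt_succ_self d)] at hne
    refine hne (iteratedDeriv_iterate_shiftedDeriv_eq_zero (c a) (contDiff_expPoly _ Q c)
      (fun i hi => h i ?_) j hj)
    rw [card_cons, sum_cons]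
    omega

end expPoly

theorem stmt_1_general (N : ℕ) (P : Fin (N + 1) → Polynomial ℝ) (hP : ∀ k, P k ≠ 0)
    (τ : Fin (N + 1) → ℝ) (hτmono : StrictMono τ)
    (Δ : ℂ → ℂ)
    (hΔ : ∀ lam : ℂ, Δ lam =
      ∑ k : Fin (N + 1), Polynomial.aeval lam (P k) * Complex.exp (-lam * (τ k : ℂ))) :
    (∃ lam : ℂ, Δ lam ≠ 0) ∧
    ∀ lam0 : ℂ, Δ lam0 = 0 →
      ∃ j ≤ N + ∑ k : Fin (N + 1), (P k).natDegree, iteratedDeriv j Δ lam0 ≠ 0 := by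
  have hΔ_eq : Δ = expPoly univ (fun k => (P k).map (algebraMap ℝ ℂ)) (fun k => -(τ k : ℂ)) := by
    funext z
    rw [hΔ, expPoly]
    refine sum_congr rfl fun k _ => ?_
    rw [eval_map_algebraMap, neg_mul_comm, mul_comm z]
  have hbound : ∀ z, ∃ j ≤ N + ∑ k, (P k).natDegree, iteratedDeriv j Δ z ≠ 0 := by
    intro z
    obtain ⟨j, hj, hne⟩ := exists_iteratedDeriv_expPoly_ne_zero univ_nonempty
      (fun k _ => map_ne_zero (hP k))
      (neg_injective.comp (Complex.ofReal_injective.comp hτmono.injective)).injOn z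
    simp only [card_univ, Fintype.card_fin, natDegree_map] at hj
    exact ⟨j, by omega, hΔ_eq ▸ hne⟩
  refine ⟨?_, fun z _ => hbound z⟩
  obtain ⟨j, -, hj⟩ := hbound 0
  by_contra! hzero
  exact hj (by simp [funext hzero])

/-- Pólya–Szegő bound: for the quasipolynomial
`Δ(λ) = Σ_{k=0}^{N} P_k(λ) e^{-λ τ_k}` with nonzero real polynomials `P_k` and delays
`0 = τ_0 < τ_1 < ... < τ_N`, the function `Δ` is not identically zero and every root
has multiplicity at most `𝒟 = N + Σ_k deg P_k`. -/
theorem stmt_1 (N : ℕ) (P : Fin (N + 1) → Polynomial ℝ) (hP : ∀ k, P k ≠ 0)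
    (τ : Fin (N + 1) → ℝ) (hτ0 : τ 0 = 0) (hτmono : StrictMono τ)
    (Δ : ℂ → ℂ)
    (hΔ : ∀ lam : ℂ, Δ lam =
      ∑ k : Fin (N + 1), Polynomial.aeval lam (P k) * Complex.exp (-lam * (τ k : ℂ))) :
    (∃ lam : ℂ, Δ lam ≠ 0) ∧
    ∀ lam0 : ℂ, Δ lam0 = 0 →
      ∃ j ≤ N + ∑ k : Fin (N + 1), (P k).natDegree, iteratedDeriv j Δ lam0 ≠ 0 :=
  stmt_1_general N P hP τ hτmono Δ hΔ
end

section
/- Let n ≥ 1 and 0 ≤ m ≤ n be integers, and define the quasipolynomial Δ(λ) = λ^n + Σ_{k=0}^{n-1} a_k λ^k + e^{-λ} Σ_{k=0}^{m} α_k λ^k, where the real coefficients are given by the MID formulas with delay τ = 1 and root λ0 = 0: a_k = (-1)^{n-k} n! C(m+n-k, m) / k! for 0 ≤ k ≤ n-1, and α_k = (-1)^{n-1} (m+n-k)! / ( k! (m-k)! ) for 0 ≤ k ≤ m. Then for every λ ∈ ℂ, Δ(λ) = (λ^{m+n+1} / m!) ∫_0^1 t^m (1-t)^n e^{-λ t}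 dt. -/
/-!
Repeated integration by parts: if `p` is a polynomial with `p⁽ᴺ⁾ = 0`, then
`λ^N ∫₀¹ p(t) e^{-λt} dt = Σ_{k<N} λ^k (p⁽ᴺ⁻¹⁻ᵏ⁾(0) - e^{-λ} p⁽ᴺ⁻¹⁻ᵏ⁾(1))`.
For `p = t^m (1-t)^n` and `N = m + n + 1` the boundary derivatives are read off from the Taylor
expansions `t^m (1-t)^n` at `0` and `(-1)^n s^n (1+s)^m` at `1`; since `p` vanishes to order `m`
at `0` and to order `n` at `1`, the first sum is a polynomial of degree `n` and the second one of
degree `m`, and after division by `m!` their coefficients are exactly the `a_k` (with `a_n = 1`)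
and `-α_k`.
-/

open Polynomial Finset
open scoped Nat

section
variable {R : Type*} [CommRing R]

theorem Polynomial.iterate_derivative_eval_eq_factorial_mul_coeff_taylor (p : R[X]) (r : R)
    (k : ℕ) : (derivative^[k] p).eval r = k ! * (taylor r p).coeff k := by
  rw [taylor_coeff, ← factorial_smul_hasseDeriv]
  simp [nsmul_eq_mul]

theorem Polynomial.coeff_one_sub_X_pow (n k : ℕ) :
    ((1 - X : R[X]) ^ n).coeff k = (-1) ^ k * n.choose k := by
  have hX (i : ℕ) : (-X : R[X]) ^ i = C ((-1) ^ i) * X ^ i := by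
    rw [neg_pow, ← C_1, ← C_neg, ← C_pow]
  simp only [← neg_add_eq_sub, add_pow, one_pow, mul_one, finsetSum_coeff, hX, mul_assoc,
    coeff_C_mul]
  rw [sum_eq_single k]
  · simp
  · intro i _ hik
    simp [Ne.symm hik]
  · intro hk
    simp [Nat.choose_eq_zero_of_lt (not_lt.mp (mem_range.not.mp hk))]

theorem iterate_derivative_X_pow_mul_one_sub_X_pow_eval_zero (m n j : ℕ) :
    (derivative^[j] (X ^ m * (1 - X) ^ n : R[X])).eval 0 =
      if m ≤ j then j ! * (-1 : R) ^ (j - m) * n.choose (j - m) else 0 := by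
  rw [iterate_derivative_eval_eq_factorial_mul_coeff_taylor, taylor_zero, coeff_X_pow_mul',
    coeff_one_sub_X_pow]
  split_ifs <;> ring

theorem iterate_derivative_X_pow_mul_one_sub_X_pow_eval_one (m n j : ℕ) :
    (derivative^[j] (X ^ m * (1 - X) ^ n : R[X])).eval 1 =
      if n ≤ j then j ! * (-1 : R) ^ n * m.choose (j - n) else 0 := by
  have : taylor 1 (X ^ m * (1 - X) ^ n : R[X]) = C ((-1) ^ n) * (X ^ n * (X + 1) ^ m) := by
    simp only [taylor_mul, taylor_pow, taylor_X, map_sub, taylor_one, C_pow, C_neg, C_1]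
    ring
  rw [iterate_derivative_eval_eq_factorial_mul_coeff_taylor, this, coeff_C_mul, coeff_X_pow_mul',
    coeff_X_add_one_pow]
  split_ifs <;> ring

theorem sum_pow_mul_iterate_derivative_X_pow_mul_one_sub_X_pow_eval_zero (m n : ℕ) (z : R) :
    ∑ k ∈ range (m + n + 1), z ^ k * (derivative^[m + n - k] (X ^ m * (1 - X) ^ n : R[X])).eval 0 =
      ∑ k ∈ range (n + 1), (-1) ^ (n - k) * n.choose k * (m + n - k)! * z ^ k := by
  rw [← sum_subset (range_subset_range.2 (by omega : n + 1 ≤ m + n + 1))]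
  · refine sum_congr rfl fun k hk ↦ ?_
    rw [iterate_derivative_X_pow_mul_one_sub_X_pow_eval_zero, if_pos (by grind),
      show m + n - k - m = n - k by omega, Nat.choose_symm (by grind)]
    ring
  · intro k _ hk
    rw [iterate_derivative_X_pow_mul_one_sub_X_pow_eval_zero, if_neg (by grind), mul_zero]

theorem sum_pow_mul_iterate_derivative_X_pow_mul_one_sub_X_pow_eval_one (m n : ℕ) (z : R) :
    ∑ k ∈ range (m + n + 1), z ^ k * (derivative^[m + n - k] (X ^ m * (1 - X) ^ n : R[X])).eval 1 =
      (-1) ^ n * ∑ k ∈ range (m + 1), m.choose k * (m + n - k)! * z ^ k := by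
  rw [mul_sum, ← sum_subset (range_subset_range.2 (by omega : m + 1 ≤ m + n + 1))]
  · refine sum_congr rfl fun k hk ↦ ?_
    rw [iterate_derivative_X_pow_mul_one_sub_X_pow_eval_one, if_pos (by grind),
      show m + n - k - n = m - k by omega, Nat.choose_symm (by grind)]
    ring
  · intro k _ hk
    rw [iterate_derivative_X_pow_mul_one_sub_X_pow_eval_one, if_neg (by grind), mul_zero]

end

theorem mul_integral_eval_mul_cexp_neg_mul (p : ℂ[X]) (z : ℂ) (a b : ℝ) :
    z * ∫ t in a..b, p.eval (t : ℂ) * Complex.exp (-z * t) =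
      p.eval (a : ℂ) * Complex.exp (-z * a) - p.eval (b : ℂ) * Complex.exp (-z * b) +
        ∫ t in a..b, (derivative p).eval (t : ℂ) * Complex.exp (-z * t) := by
  have hp (t : ℝ) : HasDerivAt (fun t : ℝ ↦ p.eval (t : ℂ)) ((derivative p).eval (t : ℂ)) t :=
    (p.hasDerivAt (t : ℂ)).comp_ofReal
  have hexp (t : ℝ) :
      HasDerivAt (fun t : ℝ ↦ Complex.exp (-z * t)) (-z * Complex.exp (-z * t)) t := by
    simpa [mul_comm] using
      (((hasDerivAt_id (t : ℂ)).const_mul (-z)).cexp).comp_ofReal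
  have ibp := intervalIntegral.integral_mul_deriv_eq_deriv_mul (a := a) (b := b) (fun t _ ↦ hp t)
    (fun t _ ↦ hexp t)
    (by apply Continuous.intervalIntegrable; fun_prop)
    (by apply Continuous.intervalIntegrable; fun_prop)
  simp only [mul_left_comm _ (-z), intervalIntegral.integral_const_mul] at ibp
  linear_combination -ibp

theorem pow_mul_integral_eval_mul_cexp_neg_mul (z : ℂ) (a b : ℝ) {N : ℕ} {p : ℂ[X]}
    (hp : derivative^[N] p = 0) :
    z ^ N * ∫ t in a..b, p.eval (t : ℂ) * Complex.exp (-z * t) =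
      ∑ k ∈ range N, z ^ k * ((derivative^[N - 1 - k] p).eval (a : ℂ) * Complex.exp (-z * a) -
        (derivative^[N - 1 - k] p).eval (b : ℂ) * Complex.exp (-z * b)) := by
  induction N generalizing p with
  | zero => simp_all
  | succ N ih =>
    rw [pow_succ, mul_assoc, mul_integral_eval_mul_cexp_neg_mul, mul_add,
      ih (by rwa [← Function.iterate_succ_apply]), sum_range_succ, add_comm]
    congr 1
    · refine sum_congr rfl fun k hk ↦ ?_
      rw [show N + 1 - 1 - k = (N - 1 - k).succ by grind, Function.iterate_succ_apply]
    · simp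

theorem Nat.cast_factorial_mul_factorial_mul_choose_div_factorial (K : Type*) [Field K]
    [CharZero K] (m : ℕ) {n k : ℕ} (hk : k ≤ n) :
    (m ! * n ! * (m + n - k).choose m / k ! : K) = n.choose k * (m + n - k)! := by
  rw [Nat.cast_choose K hk, Nat.cast_choose K (show m ≤ m + n - k by omega),
    show m + n - k - m = n - k by omega]
  field_simp [Nat.factorial_ne_zero]

theorem factorial_mul_pow_add_sum_choose_div_factorial {K : Type*} [Field K] [CharZero K]
    (m n : ℕ) (z : K) :
    (m ! : K) * (z ^ n + ∑ k : Fin n, (-1) ^ (n - (k : ℕ)) * n ! * ((m + n - k).choose m : K) /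
        (k : ℕ)! * z ^ (k : ℕ)) =
      ∑ k ∈ range (n + 1), (-1) ^ (n - k) * n.choose k * (m + n - k)! * z ^ k := by
  rw [Fin.sum_univ_eq_sum_range
      (fun k ↦ (-1 : K) ^ (n - k) * n ! * ((m + n - k).choose m : K) / k ! * z ^ k),
    sum_range_succ, mul_add, mul_sum, add_comm]
  congr 1
  · refine sum_congr rfl fun k hk ↦ ?_
    linear_combination (-1) ^ (n - k) * z ^ k *
      Nat.cast_factorial_mul_factorial_mul_choose_div_factorial K m (mem_range.1 hk).le
  · simp

theorem factorial_mul_sum_factorial_div_factorial_mul_factorial {K : Type*} [Field K]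
    [CharZero K] {m n : ℕ} (hn : 1 ≤ n) (z : K) :
    (m ! : K) * ∑ k : Fin (m + 1), (-1) ^ (n - 1) * ((m + n - k)! : K) /
        ((k : ℕ)! * (m - k)!) * z ^ (k : ℕ) =
      -((-1) ^ n * ∑ k ∈ range (m + 1), m.choose k * (m + n - k)! * z ^ k) := by
  have hsign : (-1 : K) ^ n = -(-1) ^ (n - 1) := by
    rw [← neg_one_mul ((-1 : K) ^ (n - 1)), ← pow_succ', Nat.sub_add_cancel hn]
  rw [Fin.sum_univ_eq_sum_range
      (fun k ↦ (-1 : K) ^ (n - 1) * (m + n - k)! / (k ! * (m - k)!) * z ^ k),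
    mul_sum, mul_sum, ← sum_neg_distrib, hsign]
  refine sum_congr rfl fun k hk ↦ ?_
  rw [Nat.cast_choose K (mem_range_succ_iff.1 hk)]
  field_simp

open intervalIntegral in
theorem stmt_5_general (n m : ℕ) (hn : 1 ≤ n)
    (a : Fin n → ℝ) (α : Fin (m + 1) → ℝ)
    (ha : ∀ k : Fin n, a k =
      (-1 : ℝ) ^ (n - (k : ℕ)) * (n.factorial : ℝ) * ((m + n - (k : ℕ)).choose m : ℝ) /
        ((k : ℕ).factorial : ℝ))
    (hα : ∀ k : Fin (m + 1), α k =
      (-1 : ℝ) ^ (n - 1) * ((m + n - (k : ℕ)).factorial : ℝ) /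
        (((k : ℕ).factorial : ℝ) * ((m - (k : ℕ)).factorial : ℝ)))
    (Δ : ℂ → ℂ)
    (hΔ : ∀ lam : ℂ, Δ lam =
      lam ^ n + ∑ k : Fin n, (a k : ℂ) * lam ^ (k : ℕ)
        + Complex.exp (-lam) * ∑ k : Fin (m + 1), (α k : ℂ) * lam ^ (k : ℕ)) :
    ∀ lam : ℂ, Δ lam =
      lam ^ (m + n + 1) / (m.factorial : ℂ) *
        ∫ t in (0 : ℝ)..1, (t : ℂ) ^ m * ((1 - t : ℝ) : ℂ) ^ n * Complex.exp (-lam * (t : ℂ)) := by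
  intro lam
  have hint := pow_mul_integral_eval_mul_cexp_neg_mul lam 0 1
    (iterate_derivative_eq_zero (p := (X ^ m * (1 - X) ^ n : ℂ[X])) (x := m + n + 1)
      (Nat.lt_succ_of_le (by compute_degree)))
  simp only [eval_mul, eval_pow, eval_X, eval_sub, eval_one, add_tsub_cancel_right,
    Complex.ofReal_zero, Complex.ofReal_one, mul_zero, Complex.exp_zero, mul_one, mul_sub,
    sum_sub_distrib, ← mul_assoc, ← sum_mul,
    sum_pow_mul_iterate_derivative_X_pow_mul_one_sub_X_pow_eval_zero,
    sum_pow_mul_iterate_derivative_X_pow_mul_one_sub_X_pow_eval_one] at hint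
  rw [hΔ, div_mul_eq_mul_div, eq_div_iff (Nat.cast_ne_zero.2 m.factorial_ne_zero)]
  simp only [ha, hα]
  push_cast
  linear_combination factorial_mul_pow_add_sum_choose_div_factorial m n lam +
    Complex.exp (-lam) * factorial_mul_sum_factorial_div_factorial_mul_factorial hn lam - hint

open intervalIntegral in
/-- integral/Kummer factorization at `τ = 1`, `λ0 = 0`: with the MID
coefficients `a_k = (-1)^{n-k} n! C(m+n-k, m) / k!` and
`α_k = (-1)^{n-1} (m+n-k)! / (k! (m-k)!)`, the quasipolynomial
`Δ(λ) = λ^n + Σ_{k<n} a_k λ^k + e^{-λ} Σ_{k≤m} α_k λ^k` factorizes as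
`Δ(λ) = (λ^{m+n+1} / m!) ∫_0^1 t^m (1-t)^n e^{-λ t} dt`. -/
theorem stmt_5 (n m : ℕ) (hn : 1 ≤ n) (hm : m ≤ n)
    (a : Fin n → ℝ) (α : Fin (m + 1) → ℝ)
    (ha : ∀ k : Fin n, a k =
      (-1 : ℝ) ^ (n - (k : ℕ)) * (n.factorial : ℝ) * ((m + n - (k : ℕ)).choose m : ℝ) /
        ((k : ℕ).factorial : ℝ))
    (hα : ∀ k : Fin (m + 1), α k =
      (-1 : ℝ) ^ (n - 1) * ((m + n - (k : ℕ)).factorial : ℝ) /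
        (((k : ℕ).factorial : ℝ) * ((m - (k : ℕ)).factorial : ℝ)))
    (Δ : ℂ → ℂ)
    (hΔ : ∀ lam : ℂ, Δ lam =
      lam ^ n + ∑ k : Fin n, (a k : ℂ) * lam ^ (k : ℕ)
        + Complex.exp (-lam) * ∑ k : Fin (m + 1), (α k : ℂ) * lam ^ (k : ℕ)) :
    ∀ lam : ℂ, Δ lam =
      lam ^ (m + n + 1) / (m.factorial : ℂ) *
        ∫ t in (0 : ℝ)..1, (t : ℂ) ^ m * ((1 - t : ℝ) : ℂ) ^ n * Complex.exp (-lam * (t : ℂ)) :=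
  stmt_5_general n m hn a α ha hα Δ hΔ
end

section
/- Let m, n ≥ 0 be integers and define F : ℂ → ℂ by F(λ) = ∫_0^1 t^m (1-t)^n e^{-λ t} dt. If m < n, then every λ ∈ ℂ with F(λ) = 0 satisfies Re(λ) < 0. If m = n, then every λ ∈ ℂ with F(λ) = 0 satisfies Re(λ) = 0. -/
/-!
Write `F = finiteLaplace (betaWeight m n)`, the Laplace transform of `t^m (1-t)^n` on `[0,1]`.
Integration by parts gives a three-term recurrence which is Kummer's equation: along a ray,
`φ r = F (z r)` solves `r φ'' + (m+n+2 + z r) φ' + (m+1) z φ = 0`. Multiplying by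
`r^(m+n+1) e^(r Re z) φ̄`, integrating over `[0,1]` and taking imaginary parts shows that a zero
`F z = 0` with `Im z ≠ 0` forces `∫₀¹ r^(m+n+1) e^(r Re z) (n - m + r Re z) |φ r|² dr = 0`.
If `Re z ≥ 0` and either `m < n` or `Re z > 0`, the integrand is nonnegative and positive near `0`
(as `φ 0 = F 0 > 0`), a contradiction; real `z` are excluded since `F` is positive on `ℝ`.
For `m = n`, the symmetry `F (-λ) = e^λ F λ` reflects zeros across the imaginary axis.
-/

open Complex ComplexConjugate Set
open scoped Interval

noncomputable def finiteLaplace (f : ℝ → ℂ) (s : ℂ) : ℂ :=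
  ∫ t in (0 : ℝ)..1, f t * cexp (-s * t)

def betaWeight (m n : ℕ) (t : ℝ) : ℂ :=
  (t : ℂ) ^ m * ((1 - t : ℝ) : ℂ) ^ n

theorem hasDerivAt_cexp_mul_ofReal (c : ℂ) (t : ℝ) :
    HasDerivAt (fun t : ℝ => cexp (c * t)) (c * cexp (c * t)) t := by
  simpa [mul_comm] using ((hasDerivAt_id (t : ℂ)).const_mul c).cexp.comp_ofReal

theorem norm_cexp_neg_mul_le {s : ℂ} {t : ℝ} (ht : t ∈ Icc (0 : ℝ) 1) :
    ‖cexp (-s * t)‖ ≤ Real.exp ‖s‖ := by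
  rw [norm_exp, Real.exp_le_exp]
  have : (-s * t).re = -s.re * t := by simp
  nlinarith [abs_re_le_norm s, neg_abs_le s.re, ht.1, ht.2, norm_nonneg s]

theorem hasDerivAt_finiteLaplace {f : ℝ → ℂ} (hf : Continuous f) (s : ℂ) :
    HasDerivAt (finiteLaplace f) (-finiteLaplace (fun t => t * f t) s) s := by
  have hF (w : ℂ) : Continuous fun t : ℝ => f t * cexp (-w * t) := by fun_prop
  have hbound (t : ℝ) (ht : t ∈ Ι (0 : ℝ) 1) (w : ℂ) (hw : w ∈ Metric.ball s 1) :
      ‖-(t * f t * cexp (-w * t))‖ ≤ ‖f t‖ * Real.exp (‖s‖ + 1) := by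
    rw [uIoc_of_le zero_le_one] at ht
    have hw' : ‖w‖ ≤ ‖s‖ + 1 := by
      have := norm_le_norm_add_norm_sub' w s
      rw [Metric.mem_ball, dist_eq_norm] at hw
      linarith
    calc ‖-(t * f t * cexp (-w * t))‖ = |t| * ‖f t‖ * ‖cexp (-w * t)‖ := by
          rw [norm_neg, norm_mul, norm_mul, norm_real, Real.norm_eq_abs]
      _ ≤ 1 * ‖f t‖ * Real.exp (‖s‖ + 1) := by
          gcongr
          · rw [abs_of_pos ht.1]; exact ht.2
          · exact (norm_cexp_neg_mul_le (Ioc_subset_Icc_self ht)).trans (Real.exp_le_exp.2 hw')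
      _ = ‖f t‖ * Real.exp (‖s‖ + 1) := by ring
  have hderiv (t : ℝ) (w : ℂ) :
      HasDerivAt (fun w => f t * cexp (-w * t)) (-(t * f t * cexp (-w * t))) w :=
    ((((hasDerivAt_id w).neg.mul_const (t : ℂ)).cexp).const_mul (f t)).congr_deriv
      (by simp only [Pi.neg_apply, id_eq, neg_mul, one_mul, mul_neg, neg_inj]; ring)
  have h := (intervalIntegral.hasDerivAt_integral_of_dominated_loc_of_deriv_le
    (μ := MeasureTheory.volume) (Metric.ball_mem_nhds s one_pos) (.of_forall fun w => (hF w).aestronglyMeasurable)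
    ((hF s).intervalIntegrable 0 1) (by fun_prop : Continuous _).aestronglyMeasurable
    (.of_forall hbound) ((by fun_prop : Continuous _).intervalIntegrable _ _)
    (.of_forall fun t _ w _ => hderiv t w)).2
  rw [intervalIntegral.integral_neg] at h
  exact h

theorem finiteLaplace_add {f g : ℝ → ℂ} (hf : Continuous f) (hg : Continuous g) (s : ℂ) :
    finiteLaplace (fun t => f t + g t) s = finiteLaplace f s + finiteLaplace g s := by
  simp only [finiteLaplace, add_mul]
  exact intervalIntegral.integral_add ((by fun_prop : Continuous _).intervalIntegrable _ _)
    ((by fun_prop : Continuous _).intervalIntegrable _ _)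

theorem finiteLaplace_const_mul (c : ℂ) (f : ℝ → ℂ) (s : ℂ) :
    finiteLaplace (fun t => c * f t) s = c * finiteLaplace f s := by
  simp only [finiteLaplace, mul_assoc, intervalIntegral.integral_const_mul]

theorem finiteLaplace_eq_mul_of_hasDerivAt {g g' : ℝ → ℂ} (hg : ∀ t, HasDerivAt g (g' t) t)
    (hg' : Continuous g') (h0 : g 0 = 0) (h1 : g 1 = 0) (s : ℂ) :
    finiteLaplace g' s = s * finiteLaplace g s := by
  have hgc : Continuous g := continuous_iff_continuousAt.2 fun t => (hg t).continuousAt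
  have hprod (t : ℝ) : HasDerivAt (fun t : ℝ => g t * cexp (-s * t))
      (g' t * cexp (-s * t) - s * (g t * cexp (-s * t))) t :=
    ((hg t).mul (hasDerivAt_cexp_mul_ofReal (-s) t)).congr_deriv (by ring)
  have hFTC := intervalIntegral.integral_eq_sub_of_hasDerivAt (fun t _ => hprod t)
    ((by fun_prop : Continuous _).intervalIntegrable 0 1)
  rw [intervalIntegral.integral_sub ((by fun_prop : Continuous _).intervalIntegrable _ _)
    ((by fun_prop : Continuous _).intervalIntegrable _ _),
    intervalIntegral.integral_const_mul] at hFTC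
  simpa [finiteLaplace, h0, h1, sub_eq_zero] using hFTC

theorem finiteLaplace_comp_one_sub (f : ℝ → ℂ) (s : ℂ) :
    finiteLaplace (fun t => f (1 - t)) (-s) = cexp s * finiteLaplace f s := by
  let g : ℝ → ℂ := fun u => f u * cexp (-s * u) * cexp s
  calc finiteLaplace (fun t => f (1 - t)) (-s) = ∫ t in (0 : ℝ)..1, g (1 - t) := by
        refine intervalIntegral.integral_congr fun t _ => ?_
        simp only [g, mul_assoc, ← Complex.exp_add]
        push_cast
        ring_nf
    _ = ∫ u in (0 : ℝ)..1, g u := by simp [intervalIntegral.integral_comp_sub_left g 1]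
    _ = cexp s * finiteLaplace f s := by
        rw [intervalIntegral.integral_mul_const, mul_comm]
        rfl

@[fun_prop]
theorem continuous_betaWeight (m n : ℕ) : Continuous (betaWeight m n) := by
  unfold betaWeight
  fun_prop

theorem betaWeight_one_sub (m n : ℕ) (t : ℝ) : betaWeight m n (1 - t) = betaWeight n m t := by
  simp only [betaWeight, sub_sub_cancel]
  ring

theorem ofReal_mul_betaWeight (m n : ℕ) (t : ℝ) :
    t * betaWeight m n t = betaWeight (m + 1) n t := by
  simp only [betaWeight]
  ring

theorem hasDerivAt_betaWeight (m n : ℕ) (t : ℝ) :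
    HasDerivAt (betaWeight (m + 1) (n + 1))
      ((m + 1) * betaWeight m (n + 1) t - (n + 1) * betaWeight (m + 1) n t) t := by
  have h1 : HasDerivAt (fun t : ℝ => (t : ℂ) ^ (m + 1)) ((m + 1 : ℕ) * (t : ℂ) ^ m) t := by
    simpa using (hasDerivAt_pow (m + 1) (t : ℂ)).comp_ofReal
  have h2 := (((hasDerivAt_id t).const_sub 1).ofReal_comp).pow (n + 1)
  refine (h1.mul h2).congr_deriv ?_
  simp only [betaWeight, Pi.pow_apply, id, Nat.add_sub_cancel]
  push_cast
  ring

theorem hasDerivAt_finiteLaplace_betaWeight (m n : ℕ) (s : ℂ) :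
    HasDerivAt (finiteLaplace (betaWeight m n)) (-finiteLaplace (betaWeight (m + 1) n) s) s := by
  simpa only [ofReal_mul_betaWeight] using hasDerivAt_finiteLaplace (continuous_betaWeight m n) s

theorem finiteLaplace_betaWeight_recurrence (m n : ℕ) (s : ℂ) :
    (m + 1) * finiteLaplace (betaWeight m n) s =
      (m + n + 2 + s) * finiteLaplace (betaWeight (m + 1) n) s
        - s * finiteLaplace (betaWeight (m + 2) n) s := by
  have h := finiteLaplace_eq_mul_of_hasDerivAt (hasDerivAt_betaWeight m n) (by fun_prop)
    (by simp [betaWeight]) (by simp [betaWeight]) s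
  have hg' : (fun t => (m + 1) * betaWeight m (n + 1) t - (n + 1) * betaWeight (m + 1) n t) =
      fun t => (m + 1) * betaWeight m n t + -(m + n + 2) * betaWeight (m + 1) n t := by
    funext t; simp only [betaWeight]; push_cast; ring
  have hg : betaWeight (m + 1) (n + 1) =
      fun t => betaWeight (m + 1) n t + -1 * betaWeight (m + 2) n t := by
    funext t; simp only [betaWeight]; push_cast; ring
  rw [hg', hg, finiteLaplace_add (by fun_prop) (by fun_prop),
    finiteLaplace_add (by fun_prop) (by fun_prop),
    finiteLaplace_const_mul, finiteLaplace_const_mul, finiteLaplace_const_mul] at h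
  linear_combination h

theorem finiteLaplace_betaWeight_ofReal_ne_zero (m n : ℕ) (c : ℝ) :
    finiteLaplace (betaWeight m n) c ≠ 0 := by
  have h : finiteLaplace (betaWeight m n) c =
      ((∫ t in (0 : ℝ)..1, t ^ m * (1 - t) ^ n * Real.exp (-c * t) : ℝ) : ℂ) := by
    rw [← intervalIntegral.integral_ofReal]
    refine intervalIntegral.integral_congr fun t _ => ?_
    simp [betaWeight, ofReal_exp]
  rw [h, ofReal_ne_zero]
  refine (intervalIntegral.intervalIntegral_pos_of_pos_on
    ((by fun_prop : Continuous _).intervalIntegrable _ _) (fun t ht => ?_) zero_lt_one).ne'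
  have := sub_pos.2 ht.2
  have := ht.1
  positivity

theorem finiteLaplace_betaWeight_neg (m n : ℕ) (s : ℂ) :
    finiteLaplace (betaWeight n m) (-s) = cexp s * finiteLaplace (betaWeight m n) s := by
  rw [← finiteLaplace_comp_one_sub]
  simp only [betaWeight_one_sub]

theorem hasDerivAt_finiteLaplace_betaWeight_mul_ofReal (j n : ℕ) (z : ℂ) (r : ℝ) :
    HasDerivAt (fun r : ℝ => finiteLaplace (betaWeight j n) (z * r))
      (-z * finiteLaplace (betaWeight (j + 1) n) (z * r)) r := by
  refine (((hasDerivAt_finiteLaplace_betaWeight j n (z * r)).comp (r : ℂ)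
    ((hasDerivAt_id (r : ℂ)).const_mul z)).comp_ofReal).congr_deriv ?_
  simp only [mul_one]
  ring

section KummerOde

variable {φ φ' φ'' : ℝ → ℂ} {z : ℂ} {a : ℝ} {b : ℕ}

/-- `2i r^(b+1) e^(r Re z) (Im z |φ|² + 2 Im (φ' φ̄))`, written without `Im` so that its
derivative is a ring identity modulo the differential equation and its conjugate. -/
noncomputable def kummerEnergy (φ φ' : ℝ → ℂ) (z : ℂ) (b : ℕ) (r : ℝ) : ℂ :=
  (r : ℂ) ^ (b + 1) * cexp (z.re * r) *
    ((z - conj z) * (φ r * conj (φ r)) + 2 * (φ' r * conj (φ r) - φ r * conj (φ' r)))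

theorem hasDerivAt_kummerEnergy (hφ : ∀ r, HasDerivAt φ (φ' r) r)
    (hφ' : ∀ r, HasDerivAt φ' (φ'' r) r)
    (hode : ∀ r : ℝ, r * φ'' r + (b + 1 + z * r) * φ' r + a * z * φ r = 0) (r : ℝ) :
    HasDerivAt (kummerEnergy φ φ' z b)
      ((z - conj z) * ((r : ℂ) ^ b * cexp (z.re * r) * (b + 1 - 2 * a + z.re * r) *
        (φ r * conj (φ r)))) r := by
  have hw : HasDerivAt (fun r : ℝ => (r : ℂ) ^ (b + 1) * cexp (z.re * r))
      ((b + 1) * (r : ℂ) ^ b * cexp (z.re * r) + (r : ℂ) ^ (b + 1) * (z.re * cexp (z.re * r)))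
      r := by
    refine ((hasDerivAt_pow (b + 1) (r : ℂ)).comp_ofReal.mul
      (hasDerivAt_cexp_mul_ofReal z.re r)).congr_deriv ?_
    push_cast
    ring
  have hq := (((hφ r).mul (hφ r).star).const_mul (z - conj z)).add
    ((((hφ' r).mul (hφ r).star).sub ((hφ r).mul (hφ' r).star)).const_mul 2)
  refine (hw.mul hq).congr_deriv ?_
  have hode_conj := congrArg conj (hode r)
  simp only [map_add, map_mul, map_natCast, map_one, conj_ofReal, map_zero] at hode_conj
  have hre : z + conj z = 2 * z.re := by rw [add_conj, ofReal_mul, ofReal_ofNat]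
  simp only [Complex.star_def, Pi.add_apply, Pi.mul_apply, Pi.sub_apply]
  linear_combination (2 * (r : ℂ) ^ b * cexp (z.re * r) * conj (φ r)) * hode r
    - (2 * (r : ℂ) ^ b * cexp (z.re * r) * φ r) * hode_conj
    - ((r : ℂ) ^ (b + 1) * cexp (z.re * r) * (φ' r * conj (φ r) - φ r * conj (φ' r))) * hre

theorem integral_pow_mul_exp_mul_normSq_eq_zero (hφ : ∀ r, HasDerivAt φ (φ' r) r)
    (hφ' : ∀ r, HasDerivAt φ' (φ'' r) r)
    (hode : ∀ r : ℝ, r * φ'' r + (b + 1 + z * r) * φ' r + a * z * φ r = 0)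
    (h1 : φ 1 = 0) (hz : z.im ≠ 0) :
    ∫ r in (0 : ℝ)..1, r ^ b * Real.exp (z.re * r) * (b + 1 - 2 * a + z.re * r) * normSq (φ r)
      = 0 := by
  have hφc : Continuous φ := continuous_iff_continuousAt.2 fun r => (hφ r).continuousAt
  have hFTC := intervalIntegral.integral_eq_sub_of_hasDerivAt
    (fun r _ => hasDerivAt_kummerEnergy hφ hφ' hode r)
    ((by fun_prop : Continuous _).intervalIntegrable 0 1)
  simp only [kummerEnergy, h1, ofReal_zero, zero_pow b.succ_ne_zero, zero_mul, mul_zero, map_zero,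
    add_zero, sub_self, intervalIntegral.integral_const_mul, mul_eq_zero, sub_conj] at hFTC
  rw [← ofReal_eq_zero, ← intervalIntegral.integral_ofReal]
  refine (intervalIntegral.integral_congr fun r _ => ?_).trans
    (hFTC.resolve_left (by simpa using hz))
  simp only [mul_conj]
  push_cast
  ring

end KummerOde

theorem integral_pow_mul_exp_mul_normSq_pos {φ : ℝ → ℂ} (hφ : Continuous φ)
    (hφ0 : φ 0 ≠ 0) {c x : ℝ} (hc : 0 ≤ c) (hx : 0 ≤ x) (hcx : 0 < c ∨ 0 < x)
    (k : ℕ) :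
    0 < ∫ r in (0 : ℝ)..1, r ^ k * Real.exp (x * r) * (c + x * r) * normSq (φ r) := by
  obtain ⟨r₀, hφr₀, hr₀⟩ := (((hφ.continuousAt.eventually_ne hφ0).filter_mono
    nhdsWithin_le_nhds).and (Ioo_mem_nhdsGT (zero_lt_one' ℝ))).exists
  have hcont : Continuous fun r : ℝ => r ^ k * Real.exp (x * r) * (c + x * r) * normSq (φ r) :=
    (by fun_prop : Continuous _).mul (continuous_normSq.comp hφ)
  refine intervalIntegral.integral_pos zero_lt_one hcont.continuousOn (fun r hr => ?_)
    ⟨r₀, Ioo_subset_Icc_self hr₀, ?_⟩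
  · have := mul_nonneg hx hr.1.le
    have := normSq_nonneg (φ r)
    have := hr.1.le
    positivity
  · have : 0 < c + x * r₀ := by
      rcases hcx with h | h
      · nlinarith [mul_nonneg hx hr₀.1.le]
      · nlinarith [mul_pos h hr₀.1]
    have := normSq_pos.2 hφr₀
    have := hr₀.1
    positivity

theorem finiteLaplace_betaWeight_ne_zero {m n : ℕ} {z : ℂ} (hmn : m ≤ n) (hx : 0 ≤ z.re)
    (hpos : m < n ∨ 0 < z.re) : finiteLaplace (betaWeight m n) z ≠ 0 := by
  intro hz0
  by_cases hy : z.im = 0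
  · refine finiteLaplace_betaWeight_ofReal_ne_zero m n z.re ?_
    rwa [← re_add_im z, hy, ofReal_zero, zero_mul, add_zero] at hz0
  let φ : ℝ → ℂ := fun r => finiteLaplace (betaWeight m n) (z * r)
  have hφ := hasDerivAt_finiteLaplace_betaWeight_mul_ofReal m n z
  have hφ' (r : ℝ) :=
    (hasDerivAt_finiteLaplace_betaWeight_mul_ofReal (m + 1) n z r).const_mul (-z)
  have hode (r : ℝ) : (r : ℂ) * (-z * (-z * finiteLaplace (betaWeight (m + 1 + 1) n) (z * r)))
      + (((m + n + 1 : ℕ) : ℂ) + 1 + z * r)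
        * (-z * finiteLaplace (betaWeight (m + 1) n) (z * r))
      + ((m + 1 : ℝ) : ℂ) * z * φ r = 0 := by
    simp only [φ]
    push_cast
    linear_combination z * finiteLaplace_betaWeight_recurrence m n (z * r)
  have hzero := integral_pow_mul_exp_mul_normSq_eq_zero hφ hφ' hode (by simpa [φ] using hz0) hy
  have hcoef : ((m + n + 1 : ℕ) : ℝ) + 1 - 2 * ((m : ℝ) + 1) = n - m := by
    push_cast
    ring
  rw [hcoef] at hzero
  have hφc : Continuous φ := continuous_iff_continuousAt.2 fun r => (hφ r).continuousAt
  have hφ0 : φ 0 ≠ 0 := by simpa [φ] using finiteLaplace_betaWeight_ofReal_ne_zero m n 0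
  refine (integral_pow_mul_exp_mul_normSq_pos hφc hφ0 (sub_nonneg.2 (Nat.cast_le.2 hmn)) hx
    ?_ _).ne' hzero
  exact hpos.imp_left fun h => sub_pos.2 (Nat.cast_lt.2 h)

/-- zeros of the Kummer-type integral function: let
`F(λ) = ∫_0^1 t^m (1-t)^n e^{-λ t} dt`. If `m < n`, every zero of `F` has negative real
part; if `m = n`, every zero of `F` has real part zero. -/
theorem stmt_6 (m n : ℕ) (F : ℂ → ℂ)
    (hF : ∀ lam : ℂ, F lam =
      ∫ t in (0 : ℝ)..1, (t : ℂ) ^ m * ((1 - t : ℝ) : ℂ) ^ n * Complex.exp (-lam * (t : ℂ))) :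
    (m < n → ∀ lam : ℂ, F lam = 0 → lam.re < 0) ∧
    (m = n → ∀ lam : ℂ, F lam = 0 → lam.re = 0) := by
  obtain rfl : F = finiteLaplace (betaWeight m n) := funext hF
  refine ⟨fun hmn lam hlam => ?_, fun hmn lam hlam => ?_⟩
  · by_contra! hre
    exact finiteLaplace_betaWeight_ne_zero hmn.le hre (.inl hmn) hlam
  · subst hmn
    rcases lt_trichotomy lam.re 0 with hre | hre | hre
    · have hneg : 0 < (-lam).re := by simpa using hre
      refine absurd ?_ (finiteLaplace_betaWeight_ne_zero (m := m) le_rfl hneg.le (.inr hneg))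
      rw [finiteLaplace_betaWeight_neg, hlam, mul_zero]
    · exact hre
    · exact absurd hlam (finiteLaplace_betaWeight_ne_zero le_rfl hre.le (.inr hre))
end

section
/- Let τ > 0, a_1, a_0, α_1, α_0 ∈ ℝ, and define the quasipolynomial Δ(λ) = λ^2 + a_1 λ + a_0 + (α_1 λ + α_0) e^{-λτ}. Let λ0 = σ0 + i θ0 with σ0, θ0 ∈ ℝ and θ0 ≠ 0 (so that τ^2 θ0^2 - sin^2(τ θ0) > 0). Then λ0 and its conjugate λ̄0 are both roots of Δ of multiplicity 2 if and only if: a_1 = -2σ0 - θ0 (2τθ0 - sin(2τθ0)) / (τ^2 θ0^2 - sin^2(τθ0)), a_0 = σ0^2 + [σ0 θ0 (2τθ0 - sin(2τθ0)) + τ^2 θ0^4 + θ0^2 sin^2(τθ0)] / (τ^2 θ0^2 - sin^2(τθ0)), α_1 = 2 θ0 e^{σ0 τ} (τθ0 cos(τθ0) - sin(τθ0)) / (τ^2 θ0^2 - sin^2(τθ0)), and α_0 = 2 θ0 e^{σ0 τ} [(σ0 - τθ0^2) sin(τθ0) - τ σ0 θ0 cos(τθ0)] / (τ^2 θ0^2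 - sin^2(τθ0)). -/
/-!
Since `Δ` has real coefficients, `conj ∘ Δ ∘ conj = Δ`, and the same holds for all its
derivatives; so `λ̄0` is a double root exactly when `λ0` is, i.e. when
`Δ(λ0) = Δ'(λ0) = 0 ≠ Δ''(λ0)`. After multiplication by `e^{λ0 τ}`, the real and imaginary
parts of `Δ(λ0) = 0` and `Δ'(λ0) = 0` are four real equations, linear in `(a₁, a₀, α₁, α₀)`;
eliminating `α₁, α₀` leaves a 2 × 2 system with determinant `D = τ²θ0² - sin²(τθ0) > 0`, and
Cramer's rule gives the stated formulas. For these coefficients `Δ''(λ0) = 0` would force `τθ0 cos(τθ0) = sin(τθ0)`, then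
`sin(τθ0) = 0` and `cos(τθ0) = 0`, which is impossible.
-/

open Complex ComplexConjugate

noncomputable def quasipoly (τ b₂ b₁ b₀ c₁ c₀ : ℝ) (z : ℂ) : ℂ :=
  b₂ * z ^ 2 + b₁ * z + b₀ + (c₁ * z + c₀) * exp (-z * τ)

theorem hasDerivAt_quasipoly (τ b₂ b₁ b₀ c₁ c₀ : ℝ) (z : ℂ) :
    HasDerivAt (quasipoly τ b₂ b₁ b₀ c₁ c₀)
      (quasipoly τ 0 (2 * b₂) b₁ (-(τ * c₁)) (c₁ - τ * c₀) z) z := by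
  have hexp : HasDerivAt (fun w : ℂ => exp (-w * τ)) (exp (-z * τ) * -τ) z := by
    simpa using ((hasDerivAt_id z).neg.mul_const (τ : ℂ)).cexp
  have h : HasDerivAt (fun w : ℂ => b₂ * w ^ 2 + b₁ * w + b₀ + (c₁ * w + c₀) * exp (-w * τ)) _ z :=
    ((((hasDerivAt_pow 2 z).const_mul _).add ((hasDerivAt_id' z).const_mul _)).add_const _).add
      ((((hasDerivAt_id' z).const_mul _).add_const _).mul hexp)
  refine h.congr_deriv ?_
  unfold quasipoly
  push_cast
  ring

theorem deriv_quasipoly (τ b₂ b₁ b₀ c₁ c₀ : ℝ) :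
    deriv (quasipoly τ b₂ b₁ b₀ c₁ c₀) = quasipoly τ 0 (2 * b₂) b₁ (-(τ * c₁)) (c₁ - τ * c₀) :=
  funext fun z => (hasDerivAt_quasipoly τ b₂ b₁ b₀ c₁ c₀ z).deriv

theorem conj_comp_quasipoly_comp_conj (τ b₂ b₁ b₀ c₁ c₀ : ℝ) :
    conj ∘ quasipoly τ b₂ b₁ b₀ c₁ c₀ ∘ conj = quasipoly τ b₂ b₁ b₀ c₁ c₀ := by
  ext z
  simp [quasipoly, ← exp_conj]

/-- The two equations are the real and imaginary parts of `e^{zτ} · quasipoly z` at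
`z = σ + θi`, using `e^{zτ} = e^{στ} (cos τθ + i sin τθ)`. -/
theorem quasipoly_eq_zero_iff (τ b₂ b₁ b₀ c₁ c₀ σ θ : ℝ) :
    quasipoly τ b₂ b₁ b₀ c₁ c₀ (σ + θ * I) = 0 ↔
      Real.exp (σ * τ) * (Real.cos (τ * θ) * (b₂ * (σ ^ 2 - θ ^ 2) + b₁ * σ + b₀)
          - Real.sin (τ * θ) * (θ * (2 * b₂ * σ + b₁))) + c₁ * σ + c₀ = 0 ∧
      Real.exp (σ * τ) * (Real.sin (τ * θ) * (b₂ * (σ ^ 2 - θ ^ 2) + b₁ * σ + b₀)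
          + Real.cos (τ * θ) * (θ * (2 * b₂ * σ + b₁))) + c₁ * θ = 0 := by
  have hrot : exp ((σ + θ * I) * τ)
      = Real.exp (σ * τ) * (Real.cos (τ * θ) + Real.sin (τ * θ) * I) := by
    rw [show (σ + θ * I) * τ = ((σ * τ : ℝ) : ℂ) + ((τ * θ : ℝ) : ℂ) * I by push_cast; ring,
      exp_add, exp_mul_I, ← ofReal_exp, ← ofReal_cos, ← ofReal_sin]
  have hinv : exp ((σ + θ * I) * τ) * exp (-(σ + θ * I) * τ) = 1 := by
    rw [← exp_add, neg_mul, add_neg_cancel, exp_zero]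
  have hscaled : exp ((σ + θ * I) * τ) * quasipoly τ b₂ b₁ b₀ c₁ c₀ (σ + θ * I)
      = ⟨Real.exp (σ * τ) * (Real.cos (τ * θ) * (b₂ * (σ ^ 2 - θ ^ 2) + b₁ * σ + b₀)
          - Real.sin (τ * θ) * (θ * (2 * b₂ * σ + b₁))) + c₁ * σ + c₀,
        Real.exp (σ * τ) * (Real.sin (τ * θ) * (b₂ * (σ ^ 2 - θ ^ 2) + b₁ * σ + b₀)
          + Real.cos (τ * θ) * (θ * (2 * b₂ * σ + b₁))) + c₁ * θ⟩ := by
    rw [mk_eq_add_mul_I, quasipoly, mul_add, ← mul_assoc _ _ (exp _), mul_comm _ (_ * _ + _),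
      mul_assoc, hinv, hrot]
    apply Complex.ext <;> simp [pow_two] <;> ring
  rw [← mul_eq_zero_iff_left (exp_ne_zero _), hscaled, Complex.ext_iff]
  exact Iff.rfl

theorem iteratedDeriv_conj_comp_comp_conj (f : ℂ → ℂ) (n : ℕ) :
    iteratedDeriv n (conj ∘ f ∘ conj) = conj ∘ iteratedDeriv n f ∘ conj := by
  induction n with
  | zero => simp
  | succ n ih => rw [iteratedDeriv_succ, ih, deriv_conj_conj, iteratedDeriv_succ]

def IsRootOfMultiplicity (f : ℂ → ℂ) (z : ℂ) (k : ℕ) : Prop :=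
  (∀ j < k, iteratedDeriv j f z = 0) ∧ iteratedDeriv k f z ≠ 0

theorem isRootOfMultiplicity_conj_iff {f : ℂ → ℂ} (hf : conj ∘ f ∘ conj = f) {z : ℂ} {k : ℕ} :
    IsRootOfMultiplicity f (conj z) k ↔ IsRootOfMultiplicity f z k := by
  have h (j : ℕ) : iteratedDeriv j f (conj z) = conj (iteratedDeriv j f z) := by
    conv_lhs => rw [← hf, iteratedDeriv_conj_comp_comp_conj]
    simp
  simp only [IsRootOfMultiplicity, h, map_eq_zero, ne_eq]

theorem isRootOfMultiplicity_two_iff {f : ℂ → ℂ} {z : ℂ} :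
    IsRootOfMultiplicity f z 2 ↔ f z = 0 ∧ deriv f z = 0 ∧ deriv (deriv f) z ≠ 0 := by
  simp only [IsRootOfMultiplicity, Nat.forall_lt_succ_right, Nat.not_lt_zero, iteratedDeriv_succ,
    iteratedDeriv_zero, and_assoc]
  simp

section DoubleRoot

variable {τ a1 a0 α1 α0 σ θ : ℝ}

theorem quasipoly_double_root_iff (hθ : θ ≠ 0)
    (hD : τ ^ 2 * θ ^ 2 - Real.sin (τ * θ) ^ 2 ≠ 0) :
    (quasipoly τ 1 a1 a0 α1 α0 (σ + θ * I) = 0 ∧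
        deriv (quasipoly τ 1 a1 a0 α1 α0) (σ + θ * I) = 0) ↔
      ((2 * σ + a1) * (τ ^ 2 * θ ^ 2 - Real.sin (τ * θ) ^ 2)
          = -2 * θ * (τ * θ - Real.sin (τ * θ) * Real.cos (τ * θ)) ∧
        (σ ^ 2 - θ ^ 2 + a1 * σ + a0) * (τ ^ 2 * θ ^ 2 - Real.sin (τ * θ) ^ 2)
          = 2 * θ ^ 2 * Real.sin (τ * θ) ^ 2 ∧
        α1 * (τ ^ 2 * θ ^ 2 - Real.sin (τ * θ) ^ 2)
          = 2 * θ * Real.exp (σ * τ) * (τ * θ * Real.cos (τ * θ) - Real.sin (τ * θ)) ∧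
        (α1 * σ + α0) * (τ ^ 2 * θ ^ 2 - Real.sin (τ * θ) ^ 2)
          = -2 * τ * θ ^ 3 * Real.exp (σ * τ) * Real.sin (τ * θ)) := by
  rw [deriv_quasipoly, quasipoly_eq_zero_iff, quasipoly_eq_zero_iff]
  set e := Real.exp (σ * τ)
  set s := Real.sin (τ * θ)
  set c := Real.cos (τ * θ)
  have hsc : s ^ 2 + c ^ 2 = 1 := Real.sin_sq_add_cos_sq _
  have he : e ≠ 0 := (Real.exp_pos _).ne'
  constructor
  · rintro ⟨⟨R0, I0⟩, R1, I1⟩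
    -- `θ R1 - I0 + τθ R0` and `I1 + τ I0` are free of `α1, α0`: the 2 × 2 system in `2σ + a1`
    -- and `σ² - θ² + a1σ + a0`.
    have hx : (2 * σ + a1) * (τ ^ 2 * θ ^ 2 - s ^ 2) = -2 * θ * (τ * θ - s * c) :=
      mul_left_cancel₀ he <| by
        linear_combination (-τ * s) * (θ * R1 - I0 + τ * θ * R0) + (τ * θ * c - s) * (I1 + τ * I0)
          - e * τ * θ ^ 2 * (τ * (2 * σ + a1) + 2) * hsc
    have hP : (σ ^ 2 - θ ^ 2 + a1 * σ + a0) * (τ ^ 2 * θ ^ 2 - s ^ 2) = 2 * θ ^ 2 * s ^ 2 :=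
      mul_left_cancel₀ he <| by
        linear_combination (s + τ * θ * c) * (θ * R1 - I0 + τ * θ * R0)
          + (τ * θ ^ 2 * s) * (I1 + τ * I0)
          - e * θ ^ 2 * τ ^ 2 * (σ ^ 2 - θ ^ 2 + a1 * σ + a0) * hsc
    have hA : α1 * (τ ^ 2 * θ ^ 2 - s ^ 2) = 2 * θ * e * (τ * θ * c - s) :=
      mul_left_cancel₀ hθ <| by
        linear_combination (τ ^ 2 * θ ^ 2 - s ^ 2) * I0 - e * s * hP - e * c * θ * hx
          - 2 * θ ^ 2 * e * s * hsc
    refine ⟨hx, hP, hA, ?_⟩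
    linear_combination (τ ^ 2 * θ ^ 2 - s ^ 2) * R0 - e * c * hP + e * s * θ * hx
  · rintro ⟨hx, hP, hA, hB⟩
    refine ⟨⟨?_, ?_⟩, ?_, ?_⟩ <;> refine mul_left_cancel₀ hD ?_
    · linear_combination e * c * hP - e * s * θ * hx + hB
    · linear_combination e * s * hP + e * c * θ * hx + θ * hA + 2 * θ ^ 2 * e * s * hsc
    · linear_combination e * c * hx + hA - τ * hB + 2 * θ * e * s * hsc
    · linear_combination e * s * hx - τ * θ * hA

theorem deriv_deriv_quasipoly_ne_zero (hτθ : τ * θ ≠ 0)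
    (hD : τ ^ 2 * θ ^ 2 - Real.sin (τ * θ) ^ 2 ≠ 0)
    (hA : α1 * (τ ^ 2 * θ ^ 2 - Real.sin (τ * θ) ^ 2)
      = 2 * θ * Real.exp (σ * τ) * (τ * θ * Real.cos (τ * θ) - Real.sin (τ * θ)))
    (hB : (α1 * σ + α0) * (τ ^ 2 * θ ^ 2 - Real.sin (τ * θ) ^ 2)
      = -2 * τ * θ ^ 3 * Real.exp (σ * τ) * Real.sin (τ * θ)) :
    deriv (deriv (quasipoly τ 1 a1 a0 α1 α0)) (σ + θ * I) ≠ 0 := by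
  rw [deriv_quasipoly, deriv_quasipoly, Ne, quasipoly_eq_zero_iff]
  set e := Real.exp (σ * τ)
  set s := Real.sin (τ * θ)
  set c := Real.cos (τ * θ)
  have hsc : s ^ 2 + c ^ 2 = 1 := Real.sin_sq_add_cos_sq _
  have he : e ≠ 0 := (Real.exp_pos _).ne'
  rintro ⟨R2, I2⟩
  have htan : τ * θ * c = s := by
    have hsq : e * (τ * θ * c - s) ^ 2 = 0 := by
      linear_combination (-1 / 2 : ℝ) * (c * ((τ ^ 2 * θ ^ 2 - s ^ 2) * R2 - τ ^ 2 * hB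
        + 2 * τ * hA) + s * ((τ ^ 2 * θ ^ 2 - s ^ 2) * I2 - τ ^ 2 * θ * hA)) - e * s ^ 2 * hsc
    simpa [he, sub_eq_zero] using hsq
  have hs : s = 0 := by
    have : e * s * (τ ^ 2 * θ ^ 2 - s ^ 2) = 0 := by
      linear_combination (τ ^ 2 * θ ^ 2 - s ^ 2) / 2 * I2 - τ ^ 2 * θ / 2 * hA
        - e * τ ^ 2 * θ ^ 2 * htan
    simpa [he, hD] using this
  have hc : c = 0 := by simpa [hs, hτθ] using htan
  simp [hs, hc] at hsc

theorem coefficient_formulas_iff (hD : τ ^ 2 * θ ^ 2 - Real.sin (τ * θ) ^ 2 ≠ 0) :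
    (a1 = -2 * σ - θ * (2 * τ * θ - Real.sin (2 * τ * θ)) /
          (τ ^ 2 * θ ^ 2 - Real.sin (τ * θ) ^ 2) ∧
        a0 = σ ^ 2 + (σ * θ * (2 * τ * θ - Real.sin (2 * τ * θ))
            + τ ^ 2 * θ ^ 4 + θ ^ 2 * Real.sin (τ * θ) ^ 2) /
          (τ ^ 2 * θ ^ 2 - Real.sin (τ * θ) ^ 2) ∧
        α1 = 2 * θ * Real.exp (σ * τ) * (τ * θ * Real.cos (τ * θ) - Real.sin (τ * θ)) /
          (τ ^ 2 * θ ^ 2 - Real.sin (τ * θ) ^ 2) ∧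
        α0 = 2 * θ * Real.exp (σ * τ) *
            ((σ - τ * θ ^ 2) * Real.sin (τ * θ) - τ * σ * θ * Real.cos (τ * θ)) /
          (τ ^ 2 * θ ^ 2 - Real.sin (τ * θ) ^ 2)) ↔
      ((2 * σ + a1) * (τ ^ 2 * θ ^ 2 - Real.sin (τ * θ) ^ 2)
          = -2 * θ * (τ * θ - Real.sin (τ * θ) * Real.cos (τ * θ)) ∧
        (σ ^ 2 - θ ^ 2 + a1 * σ + a0) * (τ ^ 2 * θ ^ 2 - Real.sin (τ * θ) ^ 2)
          = 2 * θ ^ 2 * Real.sin (τ * θ) ^ 2 ∧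
        α1 * (τ ^ 2 * θ ^ 2 - Real.sin (τ * θ) ^ 2)
          = 2 * θ * Real.exp (σ * τ) * (τ * θ * Real.cos (τ * θ) - Real.sin (τ * θ)) ∧
        (α1 * σ + α0) * (τ ^ 2 * θ ^ 2 - Real.sin (τ * θ) ^ 2)
          = -2 * τ * θ ^ 3 * Real.exp (σ * τ) * Real.sin (τ * θ)) := by
  rw [show 2 * τ * θ = 2 * (τ * θ) by ring, Real.sin_two_mul]
  set e := Real.exp (σ * τ)
  set s := Real.sin (τ * θ)
  set c := Real.cos (τ * θ)
  set D := τ ^ 2 * θ ^ 2 - s ^ 2 with hD_def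
  constructor
  · rintro ⟨rfl, rfl, rfl, rfl⟩
    refine ⟨?_, ?_, ?_, ?_⟩
    · field_simp; ring
    · field_simp; rw [hD_def]; ring
    · field_simp
    · field_simp; ring
  · rintro ⟨hx, hP, hA, hB⟩
    refine ⟨?_, ?_, ?_, ?_⟩ <;> field_simp
    · linear_combination hx
    · linear_combination hP - σ * hx
    · linear_combination hA
    · linear_combination hB - σ * hA

end DoubleRoot

/-- double complex-conjugate roots of a second-order retarded
quasipolynomial: `λ0 = σ0 + iθ0` (with `θ0 ≠ 0`) and its conjugate are roots of
multiplicity 2 of `Δ(λ) = λ² + a₁λ + a₀ + (α₁λ + α₀)e^{-λτ}` if and only if the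
coefficients are given by the stated trigonometric formulas. -/
theorem stmt_7 (τ a1 a0 α1 α0 σ0 θ0 : ℝ) (hτ : 0 < τ) (hθ : θ0 ≠ 0)
    (Δ : ℂ → ℂ)
    (hΔ : ∀ lam : ℂ, Δ lam =
      lam ^ 2 + (a1 : ℂ) * lam + (a0 : ℂ)
        + ((α1 : ℂ) * lam + (α0 : ℂ)) * Complex.exp (-lam * (τ : ℂ)))
    (lam0 : ℂ) (hlam0 : lam0 = (σ0 : ℂ) + (θ0 : ℂ) * Complex.I) :
    ((∀ j < 2, iteratedDeriv j Δ lam0 = 0) ∧ iteratedDeriv 2 Δ lam0 ≠ 0 ∧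
        (∀ j < 2, iteratedDeriv j Δ (starRingEnd ℂ lam0) = 0) ∧
        iteratedDeriv 2 Δ (starRingEnd ℂ lam0) ≠ 0)
    ↔ (a1 = -2 * σ0 - θ0 * (2 * τ * θ0 - Real.sin (2 * τ * θ0)) /
          (τ ^ 2 * θ0 ^ 2 - Real.sin (τ * θ0) ^ 2) ∧
        a0 = σ0 ^ 2 + (σ0 * θ0 * (2 * τ * θ0 - Real.sin (2 * τ * θ0))
            + τ ^ 2 * θ0 ^ 4 + θ0 ^ 2 * Real.sin (τ * θ0) ^ 2) /
          (τ ^ 2 * θ0 ^ 2 - Real.sin (τ * θ0) ^ 2) ∧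
        α1 = 2 * θ0 * Real.exp (σ0 * τ) * (τ * θ0 * Real.cos (τ * θ0) - Real.sin (τ * θ0)) /
          (τ ^ 2 * θ0 ^ 2 - Real.sin (τ * θ0) ^ 2) ∧
        α0 = 2 * θ0 * Real.exp (σ0 * τ) *
            ((σ0 - τ * θ0 ^ 2) * Real.sin (τ * θ0) - τ * σ0 * θ0 * Real.cos (τ * θ0)) /
          (τ ^ 2 * θ0 ^ 2 - Real.sin (τ * θ0) ^ 2)) := by
  subst hlam0
  obtain rfl : Δ = quasipoly τ 1 a1 a0 α1 α0 := funext fun z => by simp [hΔ, quasipoly]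
  have hτθ : τ * θ0 ≠ 0 := mul_ne_zero hτ.ne' hθ
  have hD : τ ^ 2 * θ0 ^ 2 - Real.sin (τ * θ0) ^ 2 ≠ 0 := by
    have := Real.sin_sq_lt_sq hτθ
    rw [mul_pow] at this
    exact (sub_pos.2 this).ne'
  rw [← and_assoc]
  change IsRootOfMultiplicity _ _ 2 ∧ IsRootOfMultiplicity _ _ 2 ↔ _
  rw [isRootOfMultiplicity_conj_iff (conj_comp_quasipoly_comp_conj ..), and_self,
    isRootOfMultiplicity_two_iff, ← and_assoc, quasipoly_double_root_iff hθ hD,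
    coefficient_formulas_iff hD]
  exact and_iff_left_of_imp fun h => deriv_deriv_quasipoly_ne_zero hτθ hD h.2.2.1 h.2.2.2
end

section
/- Let n ≥ 1, let P_0(λ) = a_n λ^n + a_{n-1} λ^{n-1} + ... + a_1 λ + a_0 be a real polynomial of degree n (a_n ≠ 0), let P_1(λ) = b_{n-1} λ^{n-1} + ... + b_1 λ + b_0 be a real polynomial of degree at most n-1, let τ > 0, and define the quasipolynomial Δ(λ) = P_0(λ) + P_1(λ) e^{-λτ}. For k ∈ ℕ define the polynomial R_k(λ; s) = Σ_{i=0}^{k} C(k,i) P_0^{(i)}(λ) s^{k-i}, where P_0^{(i)} is the i-th derivative of P_0. If Δ admits a real root λ0 of multiplicity at least n, then for every λ ∈ ℂ: Δ(λ) = (λ - λ0)^n ( a_n + ∫_0^1 e^{-(λ-λ0) τ t} · τ R_{n-1}(λ0; τ t) / (n-1)! dt ). -/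
/-!
Multiplying by `e^{λτ}`, `λ₀` becomes an `n`-fold root of `P₀(λ) e^{λτ} + P₁(λ)`. Since
`deg P₁ < n`, the polynomial `P₁` is therefore minus the Taylor polynomial of order `n - 1` of
`P₀(λ) e^{λτ}` at `λ₀`, whose coefficients are `e^{λ₀τ} R_j(λ₀; τ) / j!` by Leibniz' rule.
With `μ = λ - λ₀` this gives `Δ(λ) = P₀(λ) - Φ(τ)` for
`Φ(s) = e^{-μs} ∑_{j<n} R_j(λ₀; s) μ^j / j!`. Because `∂ₛ R_j = j R_{j-1}`, the derivative
telescopes to `Φ'(s) = -e^{-μs} R_{n-1}(λ₀; s) μ^n / (n-1)!`, while `Φ(0)` is the Taylor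
polynomial of order `n - 1` of `P₀` at `λ₀`, that is `P₀(λ) - aₙ μ^n`. Integrating `Φ'` over
`[0, τ]` gives the formula.
-/

open Polynomial Finset Complex
open scoped Nat

namespace Polynomial

theorem iterate_derivative_eval_eq_factorial_mul_hasseDeriv {R : Type*} [CommSemiring R]
    (p : R[X]) (k : ℕ) (a : R) :
    (derivative^[k] p).eval a = k ! * (hasseDeriv k p).eval a := by
  rw [← factorial_smul_hasseDeriv, LinearMap.smul_apply, eval_smul, nsmul_eq_mul]

theorem iterate_derivative_natDegree_eval {R : Type*} [CommSemiring R] (p : R[X]) (a : R) :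
    (derivative^[p.natDegree] p).eval a = p.natDegree ! * p.leadingCoeff := by
  rw [iterate_derivative_eval_eq_factorial_mul_hasseDeriv, hasseDeriv_natDegree_eq_C, eval_C]

theorem eval_eq_sum_range_iterate_derivative {K : Type*} [Field K] [CharZero K] {p : K[X]}
    {n : ℕ} (hp : p.natDegree < n) (a z : K) :
    p.eval z = ∑ j ∈ range n, (derivative^[j] p).eval a * (z - a) ^ j / j ! := by
  rw [← taylor_eval_sub a p z, eval_eq_sum_range' (by rwa [natDegree_taylor])]
  refine sum_congr rfl fun j _ => ?_
  rw [taylor_coeff, iterate_derivative_eval_eq_factorial_mul_hasseDeriv, mul_assoc,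
    mul_div_cancel_left₀ _ (Nat.cast_ne_zero.2 j.factorial_ne_zero)]

theorem iteratedDeriv_eval {𝕜 : Type*} [NontriviallyNormedField 𝕜] (p : 𝕜[X]) (k : ℕ) :
    iteratedDeriv k (fun x => p.eval x) = fun x => (derivative^[k] p).eval x := by
  induction k with
  | zero => simp
  | succ k ih =>
    rw [iteratedDeriv_succ, ih, Function.iterate_succ_apply']
    ext x
    exact Polynomial.deriv _

end Polynomial

theorem iteratedDeriv_fun_mul_eq_zero_of_forall_le {𝕜 𝔸 : Type*} [NontriviallyNormedField 𝕜]
    [NormedRing 𝔸] [NormedAlgebra 𝕜 𝔸] {f g : 𝕜 → 𝔸} {x : 𝕜} {k : ℕ}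
    (hf : ContDiffAt 𝕜 k f x) (hg : ContDiffAt 𝕜 k g x)
    (h : ∀ i ≤ k, iteratedDeriv i f x = 0) :
    iteratedDeriv k (fun y => f y * g y) x = 0 := by
  rw [iteratedDeriv_fun_mul hf hg]
  exact sum_eq_zero fun i hi => by rw [h i (Nat.lt_succ_iff.1 (mem_range.1 hi))]; simp

/-- The Appell sequence generated by `a`; the paper's `R_k(λ; s)` is
`appell (fun i => P₀⁽ⁱ⁾(λ)) k s`. -/
def appell {R : Type*} [CommSemiring R] (a : ℕ → R) (k : ℕ) (s : R) : R :=
  ∑ i ∈ range (k + 1), (k.choose i : R) * a i * s ^ (k - i)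

theorem appell_zero_right {R : Type*} [CommSemiring R] (a : ℕ → R) (k : ℕ) :
    appell a k 0 = a k := by
  rw [appell, sum_eq_single_of_mem k (self_mem_range_succ k)]
  · simp
  · intro i hi hik
    have : 0 < k - i := by have := mem_range.1 hi; omega
    simp [zero_pow this.ne']

theorem hasDerivAt_appell {𝕜 : Type*} [NontriviallyNormedField 𝕜] (a : ℕ → 𝕜) (k : ℕ) (s : 𝕜) :
    HasDerivAt (appell a k) (k * appell a (k - 1) s) s := by
  have h := HasDerivAt.fun_sum (u := range (k + 1)) fun i _ =>
    ((hasDerivAt_pow (k - i) s).const_mul ((k.choose i : 𝕜) * a i))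
  refine h.congr_deriv ?_
  cases k with
  | zero => simp
  | succ m =>
    rw [sum_range_succ, Nat.sub_self, Nat.cast_zero, zero_mul, mul_zero, add_zero,
      Nat.add_sub_cancel, appell, mul_sum]
    refine sum_congr rfl fun i hi => ?_
    have hi : i ≤ m := Nat.lt_succ_iff.1 (mem_range.1 hi)
    have hchoose : (m.choose i : 𝕜) * (m + 1) = ((m + 1).choose i : ℕ) * ((m + 1 - i : ℕ) : 𝕜) := by
      have := congrArg (Nat.cast : ℕ → 𝕜) (Nat.choose_mul_succ_eq m i)
      simpa only [Nat.cast_mul, Nat.cast_succ] using this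
    rw [show m + 1 - i - 1 = m - i by omega]
    simp only [Nat.cast_add, Nat.cast_one]
    linear_combination (-(a i * s ^ (m - i))) * hchoose

theorem hasDerivAt_cexp_mul_sum_appell (a : ℕ → ℂ) (μ s : ℂ) (n : ℕ) :
    HasDerivAt (fun s => cexp (-μ * s) * ∑ j ∈ range (n + 1), appell a j s * μ ^ j / j !)
      (-(cexp (-μ * s) * appell a n s * μ ^ (n + 1) / n !)) s := by
  have hexp : HasDerivAt (fun s => cexp (-μ * s)) (cexp (-μ * s) * (-μ)) s := by
    simpa using ((hasDerivAt_id s).const_mul (-μ)).cexp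
  have hsum := HasDerivAt.fun_sum (u := range (n + 1)) fun j _ =>
    ((hasDerivAt_appell a j s).mul_const (μ ^ j)).div_const (j ! : ℂ)
  refine (hexp.mul hsum).congr_deriv ?_
  have hshift : ∑ j ∈ range (n + 1), j * appell a (j - 1) s * μ ^ j / j !
      = μ * ∑ j ∈ range n, appell a j s * μ ^ j / j ! := by
    rw [sum_range_succ', mul_sum]
    simp only [Nat.cast_zero, zero_mul, zero_div, add_zero, Nat.add_sub_cancel]
    refine sum_congr rfl fun j _ => ?_
    rw [Nat.factorial_succ]
    push_cast
    field_simp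
    ring
  rw [hshift, sum_range_succ]
  ring

theorem integral_cexp_mul_appell (a : ℕ → ℂ) (m : ℕ) (μ c : ℂ) :
    μ ^ (m + 1) * ∫ t in (0 : ℝ)..1, cexp (-μ * c * t) * (c * appell a m (c * t) / m !)
      = (∑ j ∈ range (m + 1), a j * μ ^ j / j !)
        - cexp (-μ * c) * ∑ j ∈ range (m + 1), appell a j c * μ ^ j / j ! := by
  set Φ : ℂ → ℂ := fun s => cexp (-μ * s) * (∑ j ∈ range (m + 1), appell a j s * μ ^ j / j !)
  have hderiv : ∀ t : ℝ, HasDerivAt (fun t : ℝ => Φ (c * t))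
      (-(μ ^ (m + 1) * (cexp (-μ * c * t) * (c * appell a m (c * t) / m !)))) t := by
    intro t
    have := ((hasDerivAt_cexp_mul_sum_appell a μ (c * t) m).comp (t : ℂ)
      ((hasDerivAt_id (t : ℂ)).const_mul c)).comp_ofReal
    refine this.congr_deriv ?_
    rw [mul_assoc (-μ) c]
    ring
  have hcont : Continuous (appell a m) :=
    continuous_iff_continuousAt.2 fun s => (hasDerivAt_appell a m s).continuousAt
  have hint : IntervalIntegrable
      (fun t : ℝ => -(μ ^ (m + 1) * (cexp (-μ * c * t) * (c * appell a m (c * t) / m !))))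
      MeasureTheory.volume 0 1 := by
    apply Continuous.intervalIntegrable
    fun_prop
  have := intervalIntegral.integral_eq_sub_of_hasDerivAt (fun t _ => hderiv t) hint
  rw [intervalIntegral.integral_neg, intervalIntegral.integral_const_mul] at this
  simp only [Φ, Complex.ofReal_one, Complex.ofReal_zero, mul_one, mul_zero, Complex.exp_zero,
    one_mul, appell_zero_right] at this
  linear_combination -this

theorem iteratedDeriv_eval_mul_cexp (p : ℂ[X]) (c x : ℂ) (k : ℕ) :
    iteratedDeriv k (fun x => p.eval x * cexp (c * x)) x
      = cexp (c * x) * appell (fun i => (derivative^[i] p).eval x) k c := by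
  rw [iteratedDeriv_fun_mul p.differentiable.contDiff.contDiffAt (by fun_prop)]
  simp only [iteratedDeriv_eval, iteratedDeriv_cexp_const_mul, appell, mul_sum]
  exact sum_congr rfl fun i _ => by ring

theorem iterate_derivative_eval_eq_of_iteratedDeriv_eq_zero (p q : ℂ[X]) {n : ℕ} {c z₀ : ℂ}
    (hroot : ∀ j < n, iteratedDeriv j (fun x => p.eval x + q.eval x * cexp (-x * c)) z₀ = 0)
    {j : ℕ} (hj : j < n) :
    (derivative^[j] q).eval z₀
      = -(cexp (c * z₀) * appell (fun i => (derivative^[i] p).eval z₀) j c) := by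
  have hsmooth : ∀ r : ℂ[X], ContDiffAt ℂ j (fun x => r.eval x) z₀ :=
    fun r => r.differentiable.contDiff.contDiffAt
  have hprod : iteratedDeriv j
      (fun x => (p.eval x + q.eval x * cexp (-x * c)) * cexp (c * x)) z₀ = 0 :=
    iteratedDeriv_fun_mul_eq_zero_of_forall_le ((hsmooth p).add ((hsmooth q).mul (by fun_prop)))
      (by fun_prop) fun i hi => hroot i (by omega)
  have hsplit : (fun x => (p.eval x + q.eval x * cexp (-x * c)) * cexp (c * x))
      = fun x => p.eval x * cexp (c * x) + q.eval x := by
    funext x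
    rw [add_mul, mul_assoc, ← Complex.exp_add, show -x * c + c * x = 0 by ring, Complex.exp_zero,
      mul_one]
  rw [hsplit, iteratedDeriv_fun_add ((hsmooth p).mul (by fun_prop)) (hsmooth q),
    iteratedDeriv_eval_mul_cexp, iteratedDeriv_eval] at hprod
  linear_combination hprod

theorem eval_mul_cexp_eq_of_iteratedDeriv_eq_zero (p q : ℂ[X]) {n : ℕ}
    (hq : q.natDegree < n) {c z₀ : ℂ}
    (hroot : ∀ j < n, iteratedDeriv j (fun x => p.eval x + q.eval x * cexp (-x * c)) z₀ = 0)
    (z : ℂ) :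
    q.eval z * cexp (-z * c) = -(cexp (-(z - z₀) * c) *
      ∑ j ∈ range n, appell (fun i => (derivative^[i] p).eval z₀) j c * (z - z₀) ^ j / j !) := by
  have hexp : cexp (c * z₀) * cexp (-z * c) = cexp (-(z - z₀) * c) := by
    rw [← Complex.exp_add]; ring_nf
  rw [eval_eq_sum_range_iterate_derivative hq z₀ z, sum_mul, mul_sum, ← sum_neg_distrib]
  refine sum_congr rfl fun j hj => ?_
  rw [iterate_derivative_eval_eq_of_iteratedDeriv_eq_zero p q hroot (mem_range.1 hj), ← hexp]
  ring

theorem eval_add_mul_cexp_eq_pow_mul (p q : ℂ[X]) {m : ℕ} (hp : p.natDegree = m + 1)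
    (hq : q.natDegree < m + 1) {c z₀ : ℂ}
    (hroot : ∀ j < m + 1,
      iteratedDeriv j (fun x => p.eval x + q.eval x * cexp (-x * c)) z₀ = 0) (z : ℂ) :
    p.eval z + q.eval z * cexp (-z * c) = (z - z₀) ^ (m + 1) * (p.leadingCoeff +
      ∫ t in (0 : ℝ)..1, cexp (-(z - z₀) * c * t) *
        (c * appell (fun i => (derivative^[i] p).eval z₀) m (c * t) / m !)) := by
  rw [mul_add, integral_cexp_mul_appell, eval_mul_cexp_eq_of_iteratedDeriv_eq_zero p q hq hroot,
    eval_eq_sum_range_iterate_derivative (n := m + 2) (by omega) z₀ z, sum_range_succ, ← hp,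
    iterate_derivative_natDegree_eval, hp, mul_assoc,
    mul_div_cancel_left₀ _ (Nat.cast_ne_zero.2 (m + 1).factorial_ne_zero)]
  ring

theorem stmt_9_general (n : ℕ) (hn : 1 ≤ n) (P0 P1 : Polynomial ℝ)
    (hdeg0 : P0.natDegree = n) (hdeg1 : P1.degree < (n : ℕ)) (τ : ℝ)
    (Δ : ℂ → ℂ)
    (hΔ : ∀ lam : ℂ, Δ lam =
      Polynomial.aeval lam P0 + Polynomial.aeval lam P1 * Complex.exp (-lam * (τ : ℂ)))
    (R : ℕ → ℝ → ℝ → ℝ)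
    (hR : ∀ (k : ℕ) (lam s : ℝ), R k lam s =
      ∑ i ∈ Finset.range (k + 1),
        (k.choose i : ℝ) * ((Polynomial.derivative^[i] P0).eval lam) * s ^ (k - i))
    (lam0 : ℝ) (hroot : ∀ j < n, iteratedDeriv j Δ (lam0 : ℂ) = 0) :
    ∀ lam : ℂ, Δ lam = (lam - (lam0 : ℂ)) ^ n *
      ((P0.leadingCoeff : ℂ) + ∫ t in (0 : ℝ)..1,
        Complex.exp (-(lam - (lam0 : ℂ)) * (τ : ℂ) * (t : ℂ)) *
          ((τ * R (n - 1) lam0 (τ * t) / ((n - 1).factorial : ℝ) : ℝ) : ℂ)) := by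
  obtain ⟨m, rfl⟩ := Nat.exists_eq_add_of_le' hn
  set Q0 := P0.map (algebraMap ℝ ℂ)
  set Q1 := P1.map (algebraMap ℝ ℂ)
  have hΔQ : Δ = fun x => Q0.eval x + Q1.eval x * cexp (-x * τ) :=
    funext fun x => by simp only [hΔ, Q0, Q1, eval_map_algebraMap]
  have hQ1 : Q1.natDegree < m + 1 := by
    by_cases h : P1 = 0
    · simp [Q1, h]
    · rwa [natDegree_map, natDegree_lt_iff_degree_lt h]
  have hcoeff (i : ℕ) :
      (derivative^[i] Q0).eval (lam0 : ℂ) = (((derivative^[i] P0).eval lam0 : ℝ) : ℂ) := by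
    rw [iterate_derivative_map, eval_map]
    exact eval₂_at_apply _ lam0
  have hintegrand (t : ℝ) : ((τ * R m lam0 (τ * t) / m ! : ℝ) : ℂ)
      = τ * appell (fun i => (derivative^[i] Q0).eval (lam0 : ℂ)) m (τ * t) / m ! := by
    simp only [hR, appell, hcoeff]
    push_cast
    rfl
  have hlead : (P0.leadingCoeff : ℂ) = Q0.leadingCoeff := (leadingCoeff_map (algebraMap ℝ ℂ)).symm
  intro lam
  rw [hΔQ] at hroot ⊢
  simp only [Nat.add_sub_cancel, hintegrand, hlead]
  exact eval_add_mul_cexp_eq_pow_mul Q0 Q1 (by rwa [natDegree_map]) hQ1 hroot lam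

/-- factorization of a quasipolynomial with an `n`-multiple real root:
if `Δ(λ) = P₀(λ) + P₁(λ)e^{-λτ}` (with `deg P₀ = n`, `deg P₁ ≤ n - 1`) has a real root
`lam0` of multiplicity at least `n`, then
`Δ(λ) = (λ - lam0)^n (aₙ + ∫_0^1 e^{-(λ-lam0)τt} τ R_{n-1}(lam0; τt)/(n-1)! dt)`,
where `R_k(λ; s) = Σ_{i≤k} C(k,i) P₀^{(i)}(λ) s^{k-i}` and `aₙ` is the leading
coefficient of `P₀`. -/
theorem stmt_9 (n : ℕ) (hn : 1 ≤ n) (P0 P1 : Polynomial ℝ)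
    (hdeg0 : P0.natDegree = n) (hdeg1 : P1.degree < (n : ℕ)) (τ : ℝ) (hτ : 0 < τ)
    (Δ : ℂ → ℂ)
    (hΔ : ∀ lam : ℂ, Δ lam =
      Polynomial.aeval lam P0 + Polynomial.aeval lam P1 * Complex.exp (-lam * (τ : ℂ)))
    (R : ℕ → ℝ → ℝ → ℝ)
    (hR : ∀ (k : ℕ) (lam s : ℝ), R k lam s =
      ∑ i ∈ Finset.range (k + 1),
        (k.choose i : ℝ) * ((Polynomial.derivative^[i] P0).eval lam) * s ^ (k - i))
    (lam0 : ℝ) (hroot : ∀ j < n, iteratedDeriv j Δ (lam0 : ℂ) = 0) :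
    ∀ lam : ℂ, Δ lam = (lam - (lam0 : ℂ)) ^ n *
      ((P0.leadingCoeff : ℂ) + ∫ t in (0 : ℝ)..1,
        Complex.exp (-(lam - (lam0 : ℂ)) * (τ : ℂ) * (t : ℂ)) *
          ((τ * R (n - 1) lam0 (τ * t) / ((n - 1).factorial : ℝ) : ℝ) : ℂ)) :=
  stmt_9_general n hn P0 P1 hdeg0 hdeg1 τ Δ hΔ R hR lam0 hroot
end

section
/- For α ∈ ℝ define the quasipolynomial Δ(λ; α) = λ + α(1 - e^{-λ}). Then: (i) Δ(0; α) = 0 for every α ∈ ℝ, and 0 is a root of Δ(·; α) of multiplicity at least 2 if and only if α = -1; (ii) if α < -1, then Δ(·; α) has a real root x > 0 (so the system is unstable); (iii) if α > -1, then every root λ ∈ ℂ of Δ(·; α) with λ ≠ 0 satisfies Re(λ) < 0. -/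
/-! At `0` the derivative of `Δ(·; α)` is `1 + α`. For `α < -1` the real function
`x ↦ Δ(x; α)` therefore dips below zero just right of `0`, while `Δ(x; α) ≥ x + α`, so it
crosses zero. For a root with `Re λ ≥ 0` write `λ = α (e^{-λ} - 1)`. If `|α| < 1`, the mean value
bound `|e^{-λ} - 1| ≤ |λ|` (as `|exp| ≤ 1` on the left half-plane) forces `λ = 0`. If `α ≥ 0`,
then `|λ + α| = α |e^{-λ}| ≤ α`, and this disc meets the closed right half-plane only at `0`. -/

open Complex Set

theorem Complex.norm_exp_sub_one_le_of_re_nonpos {z : ℂ} (hz : z.re ≤ 0) :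
    ‖exp z - 1‖ ≤ ‖z‖ := by
  have h := (convex_halfSpace_re_le (0 : ℝ)).norm_image_sub_le_of_norm_hasDerivWithin_le
    (fun w _ => (hasDerivAt_exp w).hasDerivWithinAt)
    (fun w (hw : w.re ≤ 0) => (norm_exp w).trans_le (Real.exp_le_one_iff.2 hw))
    (show (0 : ℂ) ∈ {w : ℂ | w.re ≤ 0} by simp) (show z ∈ {w : ℂ | w.re ≤ 0} from hz)
  simpa using h

theorem exists_gt_lt_of_hasDerivAt_neg {f : ℝ → ℝ} {f' a : ℝ} (hf : HasDerivAt f f' a)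
    (hf' : f' < 0) : ∃ b > a, f b < f a := by
  obtain ⟨b, hslope, hab⟩ := ((hf.hasDerivWithinAt (s := Ioi a).limsup_slope_le' (lt_irrefl a)
    hf').and self_mem_nhdsWithin).exists
  refine ⟨b, hab, ?_⟩
  rw [slope_def_field, div_neg_iff] at hslope
  rcases hslope with ⟨-, h⟩ | ⟨h, -⟩
  · exact absurd (sub_pos.2 hab) h.not_gt
  · exact sub_neg.1 h

section

noncomputable def delayCharFun (α : ℝ) (z : ℂ) : ℂ := z + α * (1 - exp (-z))

variable {α : ℝ} {z : ℂ}

@[simp]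
theorem delayCharFun_zero : delayCharFun α 0 = 0 := by
  simp [delayCharFun]

theorem hasDerivAt_delayCharFun (z : ℂ) :
    HasDerivAt (delayCharFun α) (1 + α * exp (-z)) z :=
  (hasDerivAt_id' z).add (((hasDerivAt_neg z).cexp.const_sub 1).const_mul (α : ℂ))
    |>.congr_deriv (by ring)

theorem deriv_delayCharFun_zero : deriv (delayCharFun α) 0 = 1 + α := by
  simp [(hasDerivAt_delayCharFun 0).deriv]

theorem delayCharFun_ofReal (x : ℝ) :
    delayCharFun α x = ((x + α * (1 - Real.exp (-x)) : ℝ) : ℂ) := by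
  simp [delayCharFun, ofReal_exp]

theorem exists_pos_delayCharFun_eq_zero (hα : α < -1) :
    ∃ x : ℝ, 0 < x ∧ delayCharFun α x = 0 := by
  set g : ℝ → ℝ := fun x => x + α * (1 - Real.exp (-x))
  have hg : HasDerivAt g (1 + α) 0 :=
    (hasDerivAt_id' (0 : ℝ)).add
      (((hasDerivAt_neg (0 : ℝ)).exp.const_sub 1).const_mul α) |>.congr_deriv (by simp)
  obtain ⟨a, ha, hga⟩ := exists_gt_lt_of_hasDerivAt_neg hg (by linarith)
  have hgb : 0 < g (a + 1 - α) := by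
    have : α ≤ α * (1 - Real.exp (-(a + 1 - α))) := by
      nlinarith [Real.exp_pos (-(a + 1 - α))]
    simp only [g]
    linarith
  obtain ⟨x, hx, hgx⟩ := intermediate_value_Icc (by linarith : a ≤ a + 1 - α)
    (by fun_prop : Continuous g).continuousOn ⟨by simpa [g] using hga.le, hgb.le⟩
  exact ⟨x, ha.trans_le hx.1, by rw [delayCharFun_ofReal]; exact_mod_cast hgx⟩

theorem eq_zero_of_delayCharFun_eq_zero_of_nonneg (hα : 0 ≤ α) (hz : 0 ≤ z.re)
    (h : delayCharFun α z = 0) : z = 0 := by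
  have hnorm : ‖z + α‖ ≤ α := by
    have : z + α = α * exp (-z) := by rw [delayCharFun] at h; linear_combination h
    rw [this, norm_mul, norm_exp, norm_real, Real.norm_of_nonneg hα]
    exact mul_le_of_le_one_right hα (Real.exp_le_one_iff.2 (by simpa using hz))
  have hsq : (z.re + α) ^ 2 + z.im ^ 2 ≤ α ^ 2 := by
    have := sq_le_sq' (by linarith [norm_nonneg (z + α)]) hnorm
    rwa [← normSq_eq_norm_sq, normSq_apply, add_re, add_im, ofReal_re, ofReal_im, add_zero,
      ← sq, ← sq] at this
  have hre : z.re = 0 := by nlinarith [sq_nonneg z.im]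
  have him : z.im = 0 := by nlinarith [sq_nonneg z.im]
  exact Complex.ext hre him

theorem eq_zero_of_delayCharFun_eq_zero_of_abs_lt_one (hα : |α| < 1) (hz : 0 ≤ z.re)
    (h : delayCharFun α z = 0) : z = 0 := by
  have hz' : z = α * (exp (-z) - 1) := by rw [delayCharFun] at h; linear_combination h
  have hle : ‖z‖ ≤ |α| * ‖z‖ := by
    calc ‖z‖ = |α| * ‖exp (-z) - 1‖ := by
          rw [congrArg norm hz', norm_mul, norm_real, Real.norm_eq_abs]
      _ ≤ |α| * ‖-z‖ := by gcongr; exact norm_exp_sub_one_le_of_re_nonpos (by simpa using hz)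
      _ = |α| * ‖z‖ := by rw [norm_neg]
  exact norm_eq_zero.1 (by nlinarith [norm_nonneg z])

theorem re_neg_of_delayCharFun_eq_zero (hα : -1 < α) (hz0 : z ≠ 0)
    (h : delayCharFun α z = 0) : z.re < 0 := by
  by_contra! hz
  rcases le_or_gt 0 α with hα0 | hα0
  · exact hz0 (eq_zero_of_delayCharFun_eq_zero_of_nonneg hα0 hz h)
  · exact hz0 (eq_zero_of_delayCharFun_eq_zero_of_abs_lt_one (abs_lt.2 ⟨hα, by linarith⟩) hz h)

end

/-- scalar delay equation `ẏ + α(y(t) - y(t-1)) = 0`: for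
`Δ(λ; α) = λ + α(1 - e^{-λ})`: (i) `0` is always a root, and it has multiplicity at
least 2 iff `α = -1`; (ii) for `α < -1` there is a positive real root; (iii) for
`α > -1` every nonzero root has negative real part. -/
theorem stmt_11 (Δ : ℝ → ℂ → ℂ)
    (hΔ : ∀ (α : ℝ) (lam : ℂ), Δ α lam = lam + (α : ℂ) * (1 - Complex.exp (-lam))) :
    (∀ α : ℝ, Δ α 0 = 0) ∧
    (∀ α : ℝ, (∀ j < 2, iteratedDeriv j (Δ α) 0 = 0) ↔ α = -1) ∧
    (∀ α : ℝ, α < -1 → ∃ x : ℝ, 0 < x ∧ Δ α (x : ℂ) = 0) ∧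
    (∀ α : ℝ, -1 < α → ∀ lam : ℂ, lam ≠ 0 → Δ α lam = 0 → lam.re < 0) := by
  obtain rfl : Δ = delayCharFun := funext₂ hΔ
  refine ⟨fun α => delayCharFun_zero, fun α => ?_, fun α => exists_pos_delayCharFun_eq_zero,
    fun α hα lam => re_neg_of_delayCharFun_eq_zero hα⟩
  simp only [Nat.forall_lt_succ_right, Nat.lt_one_iff, forall_eq, iteratedDeriv_zero,
    iteratedDeriv_one, delayCharFun_zero, deriv_delayCharFun_zero, true_and]
  rw [← ofReal_one, ← ofReal_add, ofReal_eq_zero]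
  exact add_eq_zero_iff_eq_neg'
end

section
/- For α ∈ ℝ define the quasipolynomial Δ(λ; α) = λ^2 - α^2 + 2α^2 e^{-λ} - α^2 e^{-2λ}. Then: (i) for every λ ∈ ℂ and α ∈ ℝ, Δ(λ; α) = (λ - α(1 - e^{-λ}))(λ + α(1 - e^{-λ})); (ii) for α = 1, the point λ = 0 is a root of Δ(·; 1) of multiplicity exactly 3, and every root λ ∈ ℂ of Δ(·; 1) with λ ≠ 0 satisfies Re(λ) < 0 (the triple root at the origin is dominant). -/
/-!
Since `Δ(λ; α) = λ² - α²(1 - e^{-λ})²` and `1 - e^{-λ} = λ - λ²/2 + O(λ³)`, for `α = 1` the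
expansion of `Δ` at the origin starts with `λ³`. A root of `Δ(·; 1)` satisfies
`|λ| = |1 - e^{-λ}|`, whereas for `λ = x + iy ≠ 0` with `x ≥ 0`
`|1 - e^{-λ}|² = (1 - e^{-x})² + 2e^{-x}(1 - cos y) < x² + y²`,
because `0 ≤ 1 - e^{-x} ≤ x` and `1 - cos y ≤ y²/2`, one of them strictly.
-/

open Complex

lemma pendulum_char_eq_mul (α z : ℂ) :
    z ^ 2 - α ^ 2 + 2 * α ^ 2 * exp (-z) - α ^ 2 * exp (-2 * z) =
      (z - α * (1 - exp (-z))) * (z + α * (1 - exp (-z))) := by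
  rw [show -2 * z = (2 : ℕ) * -z by push_cast; ring, exp_nat_mul]
  ring

lemma iteratedDeriv_pendulum_char_zero (n : ℕ) :
    iteratedDeriv n (fun z : ℂ => z ^ 2 - 1 + 2 * exp (-z) - exp (-2 * z)) 0 =
      (if n = 2 then 2 else 0) - (if n = 0 then 1 else 0) + 2 * (-1) ^ n - (-2) ^ n := by
  have hneg : (fun z : ℂ => exp (-z)) = fun z => exp (-1 * z) := by
    funext z
    rw [neg_one_mul]
  rw [iteratedDeriv_fun_sub (by fun_prop) (by fun_prop),
    iteratedDeriv_fun_add (by fun_prop) (by fun_prop),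
    iteratedDeriv_fun_sub (by fun_prop) (by fun_prop), iteratedDeriv_const_mul_field, hneg,
    iteratedDeriv_cexp_const_mul, iteratedDeriv_cexp_const_mul, iteratedDeriv_fun_pow_zero,
    iteratedDeriv_const]
  simp

lemma sq_norm_one_sub_exp_neg (w : ℂ) :
    ‖1 - exp (-w)‖ ^ 2 =
      (1 - Real.exp (-w.re)) ^ 2 + 2 * Real.exp (-w.re) * (1 - Real.cos w.im) := by
  rw [Complex.sq_norm, normSq_apply]
  simp only [sub_re, sub_im, one_re, one_im, exp_re, exp_im, neg_re, neg_im, Real.cos_neg,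
    Real.sin_neg]
  linear_combination Real.exp (-w.re) ^ 2 * Real.cos_sq_add_sin_sq w.im

lemma norm_one_sub_exp_neg_lt_norm {w : ℂ} (hre : 0 ≤ w.re) (hw : w ≠ 0) :
    ‖1 - exp (-w)‖ < ‖w‖ := by
  obtain ⟨x, y⟩ := w
  have hexp_pos : 0 < Real.exp (-x) := Real.exp_pos _
  have hexp_le_one : Real.exp (-x) ≤ 1 := Real.exp_le_one_iff.2 (neg_nonpos.2 hre)
  have hexp_ge : 1 - x ≤ Real.exp (-x) := by linarith [Real.add_one_le_exp (-x)]
  suffices ‖1 - exp (-⟨x, y⟩)‖ ^ 2 < ‖(⟨x, y⟩ : ℂ)‖ ^ 2 from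
    lt_of_pow_lt_pow_left₀ 2 (norm_nonneg _) this
  rw [sq_norm_one_sub_exp_neg, Complex.sq_norm, normSq_apply]
  dsimp only at hre ⊢
  rcases eq_or_ne y 0 with rfl | hy
  · have hx : x ≠ 0 := fun hx => hw (Complex.ext hx rfl)
    have hexp_gt : 1 - x < Real.exp (-x) := by linarith [Real.add_one_lt_exp (neg_ne_zero.2 hx)]
    rw [Real.cos_zero]
    nlinarith
  · have hcos : 1 - y ^ 2 / 2 < Real.cos y := Real.one_sub_sq_div_two_lt_cos hy
    nlinarith [mul_lt_mul_of_pos_left hcos hexp_pos]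

lemma re_neg_of_sq_eq_sq_one_sub_exp_neg {z : ℂ} (hz : z ≠ 0)
    (h : z ^ 2 = (1 - exp (-z)) ^ 2) : z.re < 0 := by
  by_contra! hre
  have hnorm : ‖z‖ = ‖1 - exp (-z)‖ := by
    have := congrArg norm h
    rwa [norm_pow, norm_pow, pow_left_inj₀ (norm_nonneg _) (norm_nonneg _) two_ne_zero] at this
  exact (norm_one_sub_exp_neg_lt_norm hre hz).ne' hnorm

/-- inverted pendulum, triple zero singularity: for
`Δ(λ; α) = λ² - α² + 2α²e^{-λ} - α²e^{-2λ}`: (i) `Δ` factorizes as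
`(λ - α(1 - e^{-λ}))(λ + α(1 - e^{-λ}))`; (ii) for `α = 1`, `λ = 0` is a root of
multiplicity exactly 3 and every nonzero root has negative real part (the triple root
at the origin is dominant). -/
theorem stmt_12 (Δ : ℝ → ℂ → ℂ)
    (hΔ : ∀ (α : ℝ) (lam : ℂ), Δ α lam =
      lam ^ 2 - (α : ℂ) ^ 2 + 2 * (α : ℂ) ^ 2 * Complex.exp (-lam)
        - (α : ℂ) ^ 2 * Complex.exp (-2 * lam)) :
    (∀ (α : ℝ) (lam : ℂ), Δ α lam =
      (lam - (α : ℂ) * (1 - Complex.exp (-lam))) * (lam + (α : ℂ) * (1 - Complex.exp (-lam)))) ∧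
    ((∀ j < 3, iteratedDeriv j (Δ 1) 0 = 0) ∧ iteratedDeriv 3 (Δ 1) 0 ≠ 0) ∧
    (∀ lam : ℂ, lam ≠ 0 → Δ 1 lam = 0 → lam.re < 0) := by
  have hfactor : ∀ (α : ℝ) (lam : ℂ), Δ α lam =
      (lam - (α : ℂ) * (1 - exp (-lam))) * (lam + (α : ℂ) * (1 - exp (-lam))) :=
    fun α lam => (hΔ α lam).trans (pendulum_char_eq_mul α lam)
  have hΔ₁ : Δ 1 = fun z => z ^ 2 - 1 + 2 * exp (-z) - exp (-2 * z) := by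
    funext z
    rw [hΔ]
    push_cast
    ring
  refine ⟨hfactor, ⟨fun j hj => ?_, ?_⟩, fun lam hne hroot => ?_⟩
  · rw [hΔ₁, iteratedDeriv_pendulum_char_zero]
    interval_cases j <;> norm_num
  · rw [hΔ₁, iteratedDeriv_pendulum_char_zero]
    norm_num
  · rw [hfactor, ofReal_one, one_mul] at hroot
    exact re_neg_of_sq_eq_sq_one_sub_exp_neg hne (by linear_combination hroot)
end

section
/- For α ∈ ℝ define the quasipolynomial Δ(λ; α) = λ^2 - α^2 + 2α^2 e^{-λ} - α^2 e^{-2λ}. Then for every α with 0 < α < 1, the point λ = 0 is a root of Δ(·; α) of multiplicity exactly 2, and every root λ ∈ ℂ of Δ(·; α) with λ ≠ 0 satisfies Re(λ) < 0 (the double root at the origin is dominant even though the maximal multiplicity 3 is not attained). -/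
/-!
Since `Δ(λ; α) = λ² - α²(1 - e^{-λ})²`, a root satisfies `‖λ‖ = α ‖1 - e^{-λ}‖`. On the closed
right half-plane `w ↦ e^{-w}` has derivative of norm at most `1`, so `‖1 - e^{-λ}‖ ≤ ‖λ‖` there
by the mean value inequality, and `α < 1` leaves no room for a nonzero root with `Re λ ≥ 0`.
At the origin the expansion `Δ(λ; α) = (1 - α²) λ² + O(λ³)` gives the double root.
-/

open Complex

/-- `Δ(·; α)` with `c = α²`. -/
noncomputable def pendulumQuasipoly (c z : ℂ) : ℂ :=
  z ^ 2 - c + 2 * c * exp (-z) - c * exp (-2 * z)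

theorem pendulumQuasipoly_eq_sq_sub (c z : ℂ) :
    pendulumQuasipoly c z = z ^ 2 - c * (1 - exp (-z)) ^ 2 := by
  have hexp : exp (-2 * z) = exp (-z) ^ 2 := by rw [← exp_nat_mul]; ring_nf
  rw [pendulumQuasipoly, hexp]
  ring

theorem hasDerivAt_pendulumQuasipoly (c z : ℂ) :
    HasDerivAt (pendulumQuasipoly c) (2 * z - 2 * c * exp (-z) + 2 * c * exp (-2 * z)) z := by
  have h := (((hasDerivAt_pow 2 z).sub_const c).add
      ((hasDerivAt_neg z).cexp.const_mul (2 * c))).sub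
      (((hasDerivAt_id' z).const_mul (-2)).cexp.const_mul c)
  exact h.congr_deriv (by push_cast; ring)

theorem deriv_pendulumQuasipoly (c : ℂ) :
    deriv (pendulumQuasipoly c) = fun z => 2 * z - 2 * c * exp (-z) + 2 * c * exp (-2 * z) :=
  funext fun z => (hasDerivAt_pendulumQuasipoly c z).deriv

theorem hasDerivAt_deriv_pendulumQuasipoly (c z : ℂ) :
    HasDerivAt (deriv (pendulumQuasipoly c))
      (2 + 2 * c * exp (-z) - 4 * c * exp (-2 * z)) z := by
  have h := (((hasDerivAt_id' z).const_mul 2).sub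
      ((hasDerivAt_neg z).cexp.const_mul (2 * c))).add
      (((hasDerivAt_id' z).const_mul (-2)).cexp.const_mul (2 * c))
  rw [deriv_pendulumQuasipoly]
  exact h.congr_deriv (by ring)

theorem iteratedDeriv_two_pendulumQuasipoly_zero (c : ℂ) :
    iteratedDeriv 2 (pendulumQuasipoly c) 0 = 2 - 2 * c := by
  rw [iteratedDeriv_succ, iteratedDeriv_one, (hasDerivAt_deriv_pendulumQuasipoly c 0).deriv]
  simp only [neg_zero, mul_zero, exp_zero, mul_one]
  ring

theorem norm_one_sub_exp_neg_le {z : ℂ} (hz : 0 ≤ z.re) : ‖1 - exp (-z)‖ ≤ ‖z‖ := by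
  have hderiv (w : ℂ) :
      HasDerivWithinAt (fun w => exp (-w)) (-exp (-w)) {w | 0 ≤ w.re} w := by
    simpa using (hasDerivAt_neg w).cexp.hasDerivWithinAt
  have hbound : ∀ w ∈ {w : ℂ | 0 ≤ w.re}, ‖-exp (-w)‖ ≤ 1 := fun w hw => by
    simpa [norm_exp] using hw
  simpa [norm_sub_rev] using
    (convex_halfSpace_re_ge 0).norm_image_sub_le_of_norm_hasDerivWithin_le
      (fun w _ => hderiv w) hbound (show (0 : ℂ) ∈ {w : ℂ | 0 ≤ w.re} by simp) hz

theorem re_neg_of_sq_eq_sq_mul_one_sub_exp_neg {a : ℝ} (ha : |a| < 1) {z : ℂ} (hz : z ≠ 0)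
    (h : z ^ 2 = (a * (1 - exp (-z))) ^ 2) : z.re < 0 := by
  by_contra! hre
  have hnorm : ‖z‖ = |a| * ‖1 - exp (-z)‖ := by
    refine (sq_eq_sq₀ (norm_nonneg _) (by positivity)).1 ?_
    simpa [norm_pow, norm_mul] using congrArg norm h
  have hle := norm_one_sub_exp_neg_le hre
  have hpos := norm_pos_iff.mpr hz
  nlinarith [abs_nonneg a]

/-- inverted pendulum, dominant double root for `0 < α < 1`: for
`Δ(λ; α) = λ² - α² + 2α²e^{-λ} - α²e^{-2λ}` with `0 < α < 1`, the point `λ = 0` is a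
root of multiplicity exactly 2 and every nonzero root has negative real part (the
double root at the origin is dominant even though the maximal multiplicity 3 is not
attained). -/
theorem stmt_13 (Δ : ℝ → ℂ → ℂ)
    (hΔ : ∀ (α : ℝ) (lam : ℂ), Δ α lam =
      lam ^ 2 - (α : ℂ) ^ 2 + 2 * (α : ℂ) ^ 2 * Complex.exp (-lam)
        - (α : ℂ) ^ 2 * Complex.exp (-2 * lam)) :
    ∀ α : ℝ, 0 < α → α < 1 →
      ((∀ j < 2, iteratedDeriv j (Δ α) 0 = 0) ∧ iteratedDeriv 2 (Δ α) 0 ≠ 0) ∧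
      (∀ lam : ℂ, lam ≠ 0 → Δ α lam = 0 → lam.re < 0) := by
  intro α hα0 hα1
  have hΔα : Δ α = pendulumQuasipoly ((α : ℂ) ^ 2) := funext (hΔ α)
  rw [hΔα]
  refine ⟨⟨fun j hj => ?_, ?_⟩, fun z hz hroot => ?_⟩
  · interval_cases j
    · simp [pendulumQuasipoly_eq_sq_sub]
    · simp [deriv_pendulumQuasipoly]
  · rw [iteratedDeriv_two_pendulumQuasipoly_zero]
    intro h
    have hα2 : α ^ 2 = 1 := by exact_mod_cast (by linear_combination -h / 2 : (α : ℂ) ^ 2 = 1)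
    nlinarith
  · refine re_neg_of_sq_eq_sq_mul_one_sub_exp_neg (abs_lt.2 ⟨by linarith, hα1⟩) hz ?_
    rw [pendulumQuasipoly_eq_sq_sub] at hroot
    linear_combination hroot
end

section
/- Let P_0 be a monic real polynomial of degree n ≥ 1 and P_1 a nonzero real polynomial with deg P_1 < n, such that P_0 and P_1 are coprime and every root of the polynomial P_0 + P_1 has negative real part. For τ ≥ 0 define Δ(λ; τ) = P_0(λ) + P_1(λ) e^{-λτ}. Then the following are equivalent: (i) for every τ ≥ 0, every root λ ∈ ℂ of Δ(·; τ) satisfies Re(λ) < 0 (delay-independent stability); (ii) |P_1(iω)| < |P_0(iω)| for every real ω > 0. -/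
/-!
(ii) ⇒ (i). Consider the pencil `P₀ + ν P₁`, `ν ∈ ℂ`. Roots depend continuously on `ν`: a monic
`Q` of degree `n` has a root within `‖Q z‖ ^ (1 / n)` of every `z`, and the roots of the pencil
are locally uniformly bounded (Cauchy). Hence the set of `ν` for which all roots lie in
`Re < 0`, and the set for which some root lies in `Re > 0`, are both open. By (ii) no member of
the pencil with `ν ∈ {1} ∪ {|ν| < 1}` has a root on the imaginary axis, and this set is
preconnected, so stability spreads from `ν = 1` to all of it. A root `λ` of `Δ(·; τ)` with
`Re λ ≥ 0` is a root of the pencil at `ν = e^{-λτ}`, which lies in that set unless `λ` is a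
nonzero imaginary number, and then (ii) excludes it directly.

(i) ⇒ (ii). As `deg P₁ < deg P₀`, `|P₁(iω)| < |P₀(iω)|` for large `ω`. If the inequality failed
at some `ω₀ > 0`, the intermediate value theorem would give `ω ≥ ω₀` with
`|P₀(iω)| = |P₁(iω)| ≠ 0` (coprimality), and a delay `τ ≥ 0` with
`e^{-iωτ} = -P₀(iω) / P₁(iω)` would make `iω` a root of `Δ(·; τ)`.
-/

open Polynomial Finset Complex Filter Topology

theorem add_mul_ne_zero_of_norm_mul_lt {𝕜 : Type*} [NormedDivisionRing 𝕜] {a b ν : 𝕜}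
    (h : ‖ν‖ * ‖b‖ < ‖a‖) : a + ν * b ≠ 0 := by
  intro h0
  rw [eq_neg_of_add_eq_zero_left h0, norm_neg, norm_mul] at h
  exact h.false

theorem Complex.exists_nonneg_exp_neg_mul_eq {ω : ℝ} (hω : 0 < ω) {c : ℂ} (hc : ‖c‖ = 1) :
    ∃ τ : ℝ, 0 ≤ τ ∧ exp (-(ω * I) * τ) = c := by
  refine ⟨(2 * Real.pi - c.arg) / ω, div_nonneg (by linarith [arg_le_pi c, Real.pi_pos]) hω.le, ?_⟩
  have hexp : -(ω * I) * ((2 * Real.pi - c.arg) / ω : ℝ) = c.arg * I - 2 * Real.pi * I := by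
    have hω0 : (ω : ℂ) ≠ 0 := by exact_mod_cast hω.ne'
    push_cast
    field_simp
    ring
  rw [hexp, exp_sub, exp_two_pi_mul_I, div_one]
  simpa [hc] using norm_mul_exp_arg_mul_I c

namespace Polynomial

section NormedField

variable {K : Type*} [NormedField K]

theorem Monic.norm_lt_of_isRoot {p : K[X]} (hp : p.Monic) {z : K} (hz : p.IsRoot z) :
    ‖z‖ < 1 + ∑ i ∈ range p.natDegree, ‖p.coeff i‖ := by
  have hsup : (range p.natDegree).sup (‖p.coeff ·‖₊) ≤ ∑ i ∈ range p.natDegree, ‖p.coeff i‖₊ :=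
    Finset.sup_le fun i hi => Finset.single_le_sum (f := (‖p.coeff ·‖₊)) (fun _ _ => zero_le) hi
  have h := hz.norm_lt_cauchyBound hp.ne_zero
  rw [cauchyBound, hp.leadingCoeff, nnnorm_one, div_one] at h
  have := NNReal.coe_lt_coe.mpr (h.trans_le (add_le_add_left hsup 1))
  push_cast at this
  linarith

theorem Monic.pow_nnnorm_sub_le_nnnorm_eval [IsAlgClosed K] {p : K[X]} (hp : p.Monic) {z : K}
    {δ : NNReal} (h : ∀ r ∈ p.roots, δ ≤ ‖z - r‖₊) : δ ^ p.natDegree ≤ ‖p.eval z‖₊ := by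
  have hsplit := IsAlgClosed.splits p
  rw [hsplit.eval_eq_prod_roots_of_monic hp, ← splits_iff_card_roots.mp hsplit,
    ← Multiset.card_map (fun r => ‖z - r‖₊)]
  change _ ≤ nnnormHom _
  rw [map_multiset_prod, Multiset.map_map]
  refine Multiset.pow_card_le_prod fun x hx => ?_
  obtain ⟨r, hr, rfl⟩ := Multiset.mem_map.mp hx
  exact h r hr

theorem Monic.exists_isRoot_pow_norm_sub_le [IsAlgClosed K] {p : K[X]} (hp : p.Monic)
    (hdeg : p.natDegree ≠ 0) (z : K) :
    ∃ r, p.IsRoot r ∧ ‖z - r‖ ^ p.natDegree ≤ ‖p.eval z‖ := by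
  have hroots : p.roots ≠ 0 := by
    rw [← Multiset.card_pos, splits_iff_card_roots.mp (IsAlgClosed.splits p)]
    exact Nat.pos_of_ne_zero hdeg
  obtain ⟨r, hr, hmin⟩ := Multiset.exists_min_image (fun r => ‖z - r‖₊) hroots
  exact ⟨r, (mem_roots hp.ne_zero).mp hr, by exact_mod_cast hp.pow_nnnorm_sub_le_nnnorm_eval hmin⟩

theorem eventually_norm_eval_lt_of_degree_lt {p q : K[X]} (hpq : q.degree < p.degree) :
    ∀ᶠ z in Bornology.cobounded K, ‖q.eval z‖ < ‖p.eval z‖ := by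
  filter_upwards [(isLittleO_cobounded_of_degree_lt hpq).def one_half_pos,
    Bornology.le_cofinite K (eventually_cofinite_not_isRoot (ne_zero_of_degree_gt hpq))]
    with z hle hz
  have : 0 < ‖p.eval z‖ := norm_pos_iff.mpr hz
  linarith

end NormedField

section Pencil

variable {R : Type*} [Semiring R] {p q : R[X]}

theorem Monic.add_smul_of_degree_lt (hp : p.Monic) (hpq : q.degree < p.degree) (ν : R) :
    (p + ν • q).Monic :=
  hp.add_of_left ((degree_smul_le ν q).trans_lt hpq)

theorem natDegree_add_smul_of_degree_lt (hpq : q.degree < p.degree) (ν : R) :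
    (p + ν • q).natDegree = p.natDegree :=
  natDegree_add_eq_left_of_degree_lt ((degree_smul_le ν q).trans_lt hpq)

end Pencil

def IsHurwitzStable (p : ℂ[X]) : Prop := ∀ z, p.IsRoot z → z.re < 0

variable {p q : ℂ[X]}

theorem norm_lt_of_isRoot_add_smul (hp : p.Monic) (hpq : q.degree < p.degree) {c : ℝ} {ν z : ℂ}
    (hν : ‖ν‖ ≤ c) (hz : (p + ν • q).IsRoot z) :
    ‖z‖ < 1 + ∑ i ∈ range p.natDegree, (‖p.coeff i‖ + c * ‖q.coeff i‖) := by
  have h := (hp.add_smul_of_degree_lt hpq ν).norm_lt_of_isRoot hz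
  rw [natDegree_add_smul_of_degree_lt hpq] at h
  refine h.trans_le (add_le_add_right (sum_le_sum fun i _ => ?_) 1)
  rw [coeff_add, coeff_smul, smul_eq_mul]
  calc ‖p.coeff i + ν * q.coeff i‖ ≤ ‖p.coeff i‖ + ‖ν‖ * ‖q.coeff i‖ :=
        (norm_add_le _ _).trans_eq (by rw [norm_mul])
    _ ≤ ‖p.coeff i‖ + c * ‖q.coeff i‖ := by gcongr

theorem isOpen_setOf_exists_isRoot_add_smul_re_pos (hp : p.Monic) (hpq : q.degree < p.degree) :
    IsOpen {ν : ℂ | ∃ z, (p + ν • q).IsRoot z ∧ 0 < z.re} := by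
  refine isOpen_iff_mem_nhds.mpr ?_
  rintro μ ⟨z, hz, hre⟩
  have hdeg : p.natDegree ≠ 0 := by
    intro h0
    rw [← natDegree_add_smul_of_degree_lt hpq μ,
      Monic.natDegree_eq_zero (hp.add_smul_of_degree_lt hpq μ)] at h0
    simp [h0] at hz
  have hcont : Continuous fun ν : ℂ => ‖(p + ν • q).eval z‖ := by
    simp only [eval_add, eval_smul, smul_eq_mul]
    fun_prop
  have hsmall : ∀ᶠ ν in 𝓝 μ, ‖(p + ν • q).eval z‖ < z.re ^ p.natDegree :=
    hcont.continuousAt.eventually_lt continuousAt_const (by simpa [hz.eq_zero] using pow_pos hre _)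
  filter_upwards [hsmall] with ν hν
  obtain ⟨r, hr, hle⟩ := (hp.add_smul_of_degree_lt hpq ν).exists_isRoot_pow_norm_sub_le
    (by rwa [natDegree_add_smul_of_degree_lt hpq]) z
  rw [natDegree_add_smul_of_degree_lt hpq] at hle
  have hdist : ‖z - r‖ < z.re := lt_of_pow_lt_pow_left₀ _ hre.le (hle.trans_lt hν)
  refine ⟨r, hr, ?_⟩
  linarith [re_le_norm (z - r), sub_re z r]

theorem isOpen_setOf_isHurwitzStable_add_smul (hp : p.Monic) (hpq : q.degree < p.degree) :
    IsOpen {ν : ℂ | IsHurwitzStable (p + ν • q)} := by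
  refine isOpen_iff_mem_nhds.mpr fun μ hμ => ?_
  set R := 1 + ∑ i ∈ range p.natDegree, (‖p.coeff i‖ + (‖μ‖ + 1) * ‖q.coeff i‖)
  set T := {z : ℂ | 0 ≤ z.re} ∩ Metric.closedBall 0 R
  have hT : IsCompact T :=
    (isCompact_closedBall 0 R).inter_left (isClosed_le continuous_const continuous_re)
  obtain ⟨m, hm, hpm⟩ : ∃ m, 0 < m ∧ ∀ z ∈ T, m ≤ ‖(p + μ • q).eval z‖ :=
    hT.exists_forall_le' (p + μ • q).continuous.norm.continuousOn
      fun z hz => norm_pos_iff.mpr fun h => (hμ z h).not_ge hz.1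
  obtain ⟨M, hM⟩ := hT.exists_bound_of_continuousOn q.continuous.continuousOn
  have hnear : ∀ᶠ ν in 𝓝 μ, ‖ν - μ‖ < 1 ∧ ‖ν - μ‖ * M < m := by
    have hcont : Continuous fun ν : ℂ => ‖ν - μ‖ := by fun_prop
    exact (hcont.continuousAt.eventually_lt continuousAt_const (by simp)).and
      ((hcont.mul continuous_const).continuousAt.eventually_lt continuousAt_const (by simpa))
  filter_upwards [hnear] with ν ⟨hν1, hνm⟩ z hz
  by_contra! hre
  have hzR : ‖z‖ ≤ R := (norm_lt_of_isRoot_add_smul hp hpq (c := ‖μ‖ + 1)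
    (by linarith [norm_le_norm_add_norm_sub' ν μ]) hz).le
  have hzT : z ∈ T := ⟨hre, by simpa using hzR⟩
  have hdiff : (p + μ • q).eval z = (μ - ν) * q.eval z := by
    have := hz.eq_zero
    simp only [eval_add, eval_smul, smul_eq_mul] at this ⊢
    linear_combination this
  have := hpm z hzT
  rw [hdiff, norm_mul, norm_sub_rev] at this
  nlinarith [hM z hzT, norm_nonneg (ν - μ)]

theorem isHurwitzStable_add_smul_of_isPreconnected {S : Set ℂ} (hS : IsPreconnected S)
    (hp : p.Monic) (hpq : q.degree < p.degree)
    (haxis : ∀ ν ∈ S, ∀ z : ℂ, z.re = 0 → ¬(p + ν • q).IsRoot z) {ν₀ ν : ℂ} (hν₀ : ν₀ ∈ S)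
    (h₀ : IsHurwitzStable (p + ν₀ • q)) (hν : ν ∈ S) : IsHurwitzStable (p + ν • q) := by
  by_contra hbad
  have hcover : S ⊆ {ν | IsHurwitzStable (p + ν • q)} ∪
      {ν : ℂ | ∃ z, (p + ν • q).IsRoot z ∧ 0 < z.re} := by
    intro ν hν
    by_cases h : IsHurwitzStable (p + ν • q)
    · exact Or.inl h
    obtain ⟨z, hz, hre⟩ := not_forall₂.mp h
    exact Or.inr ⟨z, hz, (not_lt.mp hre).lt_of_ne' (haxis ν hν z · hz)⟩
  obtain ⟨x, -, hx, z, hz, hre⟩ := hS _ _ (isOpen_setOf_isHurwitzStable_add_smul hp hpq)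
    (isOpen_setOf_exists_isRoot_add_smul_re_pos hp hpq) hcover ⟨ν₀, hν₀, h₀⟩
    ⟨ν, hν, (hcover hν).resolve_left hbad⟩
  exact (hx z hz).not_gt hre

theorem isHurwitzStable_add_smul_of_mem_insert_ball (hp : p.Monic) (hpq : q.degree < p.degree)
    (haxis : ∀ ω : ℝ, ω ≠ 0 → ‖q.eval (ω * I)‖ < ‖p.eval (ω * I)‖)
    (h0 : ‖q.eval 0‖ ≤ ‖p.eval 0‖) (hp0 : p.eval 0 ≠ 0) (h1 : IsHurwitzStable (p + q))
    {ν : ℂ} (hν : ν ∈ insert 1 (Metric.ball 0 1)) : IsHurwitzStable (p + ν • q) := by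
  have hS : IsPreconnected (insert (1 : ℂ) (Metric.ball 0 1)) :=
    (convex_ball 0 1).isPreconnected.subset_closure (Set.subset_insert _ _)
      (Set.insert_subset_iff.mpr ⟨by simp [closure_ball], subset_closure⟩)
  refine isHurwitzStable_add_smul_of_isPreconnected hS hp hpq ?_ (Set.mem_insert 1 _)
    (by rwa [one_smul]) hν
  rintro ν hν z hre hz
  rcases hν with rfl | hν
  · exact (h1 z (by rwa [one_smul] at hz)).ne hre
  have hν : ‖ν‖ < 1 := mem_ball_zero_iff.mp hν
  refine add_mul_ne_zero_of_norm_mul_lt ?_ (by simpa using hz.eq_zero)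
  have hz : z = z.im * I := by apply Complex.ext <;> simp [hre]
  rcases eq_or_ne z.im 0 with him | him
  · rw [hz, him, ofReal_zero, zero_mul]
    calc ‖ν‖ * ‖q.eval 0‖ ≤ ‖ν‖ * ‖p.eval 0‖ := by gcongr
      _ < ‖p.eval 0‖ := mul_lt_of_lt_one_left (norm_pos_iff.mpr hp0) hν
  · rw [hz]
    calc ‖ν‖ * ‖q.eval (z.im * I)‖ ≤ ‖q.eval (z.im * I)‖ :=
          mul_le_of_le_one_left (norm_nonneg _) hν.le
      _ < ‖p.eval (z.im * I)‖ := haxis z.im him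

theorem re_neg_of_eval_add_mul_exp_eq_zero (hp : p.Monic) (hpq : q.degree < p.degree)
    (haxis : ∀ ω : ℝ, ω ≠ 0 → ‖q.eval (ω * I)‖ < ‖p.eval (ω * I)‖)
    (h0 : ‖q.eval 0‖ ≤ ‖p.eval 0‖) (hp0 : p.eval 0 ≠ 0) (h1 : IsHurwitzStable (p + q))
    {τ : ℝ} (hτ : 0 ≤ τ) {s : ℂ} (hs : p.eval s + q.eval s * exp (-s * τ) = 0) : s.re < 0 := by
  by_contra! hre
  have hroot : (p + exp (-s * τ) • q).IsRoot s := by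
    simpa [mul_comm (exp _)] using hs
  have hnorm : ‖exp (-s * τ)‖ = Real.exp (-(s.re * τ)) := by simp [norm_exp]
  by_cases hsτ : s * τ = 0
  · rw [neg_mul, hsτ, neg_zero, exp_zero, one_smul] at hroot
    exact (h1 s hroot).not_ge hre
  obtain ⟨hs0, hτ0⟩ := mul_ne_zero_iff.mp hsτ
  rcases hre.lt_or_eq with hre | hre
  · have hμ : exp (-s * τ) ∈ insert 1 (Metric.ball 0 1) := by
      refine Or.inr (mem_ball_zero_iff.mpr ?_)
      rw [hnorm, Real.exp_lt_one_iff, neg_lt_zero]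
      exact mul_pos hre (hτ.lt_of_ne (by exact_mod_cast hτ0.symm))
    exact (isHurwitzStable_add_smul_of_mem_insert_ball hp hpq haxis h0 hp0 h1 hμ s hroot).not_gt hre
  · have hsI : s = s.im * I := by apply Complex.ext <;> simp [← hre]
    have him : s.im ≠ 0 := fun h => hs0 (by rw [hsI, h, ofReal_zero, zero_mul])
    have hlt : ‖exp (-s * τ)‖ * ‖q.eval s‖ < ‖p.eval s‖ := by
      rw [hnorm, ← hre, zero_mul, neg_zero, Real.exp_zero, one_mul, hsI]
      exact haxis _ him
    exact add_mul_ne_zero_of_norm_mul_lt hlt (by linear_combination hs)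

theorem norm_eval_zero_le_of_forall_pos
    (h : ∀ ω : ℝ, 0 < ω → ‖q.eval (ω * I)‖ < ‖p.eval (ω * I)‖) : ‖q.eval 0‖ ≤ ‖p.eval 0‖ := by
  have hclosed : IsClosed {ω : ℝ | ‖q.eval (ω * I)‖ ≤ ‖p.eval (ω * I)‖} :=
    isClosed_le (by fun_prop) (by fun_prop)
  have h0 : (0 : ℝ) ∈ closure (Set.Ioi 0) := by rw [closure_Ioi]; exact Set.self_mem_Ici
  simpa using hclosed.closure_subset_iff.mpr (fun ω hω => (h ω hω).le) h0

theorem norm_eval_lt_of_forall_re_neg (hpq : q.degree < p.degree)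
    (hcop : ∀ z, p.eval z ≠ 0 ∨ q.eval z ≠ 0)
    (hstab : ∀ τ : ℝ, 0 ≤ τ → ∀ s : ℂ, p.eval s + q.eval s * exp (-s * τ) = 0 → s.re < 0)
    {ω : ℝ} (hω : 0 < ω) : ‖q.eval (ω * I)‖ < ‖p.eval (ω * I)‖ := by
  by_contra! hle
  have hI : Tendsto (fun t : ℝ => (t : ℂ) * I) atTop (Bornology.cobounded ℂ) :=
    tendsto_norm_atTop_iff_cobounded.mp (by simpa using tendsto_abs_atTop_atTop)
  obtain ⟨W, hW, hωW⟩ := ((hI.eventually (eventually_norm_eval_lt_of_degree_lt hpq)).and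
    (eventually_ge_atTop ω)).exists
  obtain ⟨ω', ⟨hω', -⟩, heq⟩ := intermediate_value_Icc hωW
    (f := fun t : ℝ => ‖p.eval (t * I)‖ - ‖q.eval (t * I)‖) (by fun_prop)
    (show (0 : ℝ) ∈ Set.Icc _ _ from ⟨by linarith, by linarith⟩)
  have heq : ‖p.eval (ω' * I)‖ = ‖q.eval (ω' * I)‖ := by linarith
  have hq : q.eval (ω' * I) ≠ 0 := fun h => (hcop _).elim (· (by simpa [h] using heq)) (· h)
  obtain ⟨τ, hτ, hexp⟩ := exists_nonneg_exp_neg_mul_eq (hω.trans_le hω')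
    (c := -p.eval (ω' * I) / q.eval (ω' * I))
    (by rw [norm_div, norm_neg, heq, div_self (norm_ne_zero_iff.mpr hq)])
  have := hstab τ hτ (ω' * I) (by rw [hexp]; field_simp; ring)
  simp at this

theorem norm_aeval_mul_I_lt_of_ne_zero {P Q : ℝ[X]}
    (h : ∀ ω : ℝ, 0 < ω → ‖aeval (ω * I) Q‖ < ‖aeval (ω * I) P‖) {ω : ℝ} (hω : ω ≠ 0) :
    ‖aeval (ω * I) Q‖ < ‖aeval (ω * I) P‖ := by
  rcases hω.lt_or_gt with hω | hω
  · have hsymm (P : ℝ[X]) : ‖aeval (((-ω : ℝ) : ℂ) * I) P‖ = ‖aeval (ω * I) P‖ := by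
      rw [← norm_conj, ← aeval_conj]
      simp
    simpa only [hsymm] using h (-ω) (neg_pos.mpr hω)
  · exact h ω hω

end Polynomial

theorem stmt_14_general (n : ℕ) (P0 P1 : Polynomial ℝ)
    (hmonic : P0.Monic) (hdeg0 : P0.natDegree = n)
    (hdeg1 : P1.degree < (n : ℕ)) (hcop : IsCoprime P0 P1)
    (hHurwitz : ∀ z : ℂ, Polynomial.aeval z (P0 + P1) = 0 → z.re < 0) :
    (∀ τ : ℝ, 0 ≤ τ → ∀ lam : ℂ,
        Polynomial.aeval lam P0 + Polynomial.aeval lam P1 * Complex.exp (-lam * (τ : ℂ)) = 0 →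
        lam.re < 0)
    ↔ (∀ ω : ℝ, 0 < ω →
        ‖Polynomial.aeval ((ω : ℂ) * Complex.I) P1‖ <
          ‖Polynomial.aeval ((ω : ℂ) * Complex.I) P0‖) := by
  set p : ℂ[X] := P0.map (algebraMap ℝ ℂ)
  set q : ℂ[X] := P1.map (algebraMap ℝ ℂ)
  have hp : p.Monic := hmonic.map _
  have hpq : q.degree < p.degree := by
    rwa [degree_map, degree_map, degree_eq_natDegree hmonic.ne_zero, hdeg0]
  have hcop' (z : ℂ) : p.eval z ≠ 0 ∨ q.eval z ≠ 0 := by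
    simpa only [p, q, eval_map_algebraMap] using aeval_ne_zero_of_isCoprime hcop z
  have h1 : IsHurwitzStable (p + q) := fun z hz => hHurwitz z (by simpa [p, q] using hz)
  constructor
  · intro h ω hω
    simp only [← eval_map_algebraMap] at h ⊢
    exact norm_eval_lt_of_forall_re_neg hpq hcop' h hω
  · intro h τ hτ s hs
    have haxis (ω : ℝ) (hω : ω ≠ 0) := norm_aeval_mul_I_lt_of_ne_zero h hω
    simp only [← eval_map_algebraMap] at h haxis hs
    have h0 : ‖q.eval 0‖ ≤ ‖p.eval 0‖ := norm_eval_zero_le_of_forall_pos h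
    have hp0 : p.eval 0 ≠ 0 := fun hp0 =>
      (hcop' 0).elim (· hp0) (· (norm_le_zero_iff.mp (by rwa [hp0, norm_zero] at h0)))
    exact re_neg_of_eval_add_mul_exp_eq_zero hp hpq haxis h0 hp0 h1 hτ hs

/-- Tsypkin's frequency-sweeping criterion for delay-independent
stability: with `P₀` monic of degree `n ≥ 1`, `P₁ ≠ 0` of degree `< n`, `P₀` and `P₁`
coprime, and `P₀ + P₁` Hurwitz, the quasipolynomial `Δ(λ; τ) = P₀(λ) + P₁(λ)e^{-λτ}`
has all roots in the open left half-plane for every delay `τ ≥ 0` if and only if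
`|P₁(iω)| < |P₀(iω)|` for every real `ω > 0`. -/
theorem stmt_14 (n : ℕ) (hn : 1 ≤ n) (P0 P1 : Polynomial ℝ)
    (hmonic : P0.Monic) (hdeg0 : P0.natDegree = n) (hP1 : P1 ≠ 0)
    (hdeg1 : P1.degree < (n : ℕ)) (hcop : IsCoprime P0 P1)
    (hHurwitz : ∀ z : ℂ, Polynomial.aeval z (P0 + P1) = 0 → z.re < 0) :
    (∀ τ : ℝ, 0 ≤ τ → ∀ lam : ℂ,
        Polynomial.aeval lam P0 + Polynomial.aeval lam P1 * Complex.exp (-lam * (τ : ℂ)) = 0 →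
        lam.re < 0)
    ↔ (∀ ω : ℝ, 0 < ω →
        ‖Polynomial.aeval ((ω : ℂ) * Complex.I) P1‖ <
          ‖Polynomial.aeval ((ω : ℂ) * Complex.I) P0‖) :=
  stmt_14_general n P0 P1 hmonic hdeg0 hdeg1 hcop hHurwitz
end

section
/- Let a_0 < 0 and 0 < τ < sqrt(-2/a_0). Define λ_+ = (-2 + sqrt(2 - a_0 τ^2)) / τ, b_0 = e^{λ_+ τ} (τ λ_+^3 + λ_+^2 + a_0 τ λ_+ - a_0), b_1 = -e^{λ_+ τ} (τ λ_+^2 + 2 λ_+ + a_0 τ), and the quasipolynomial Δ(λ) = λ^2 + a_0 + (b_0 + b_1 λ) e^{-λτ}. Then λ_+ < 0, λ_+ is a real root of Δ of multiplicity at least 3, and every root λ ∈ ℂ of Δ with λ ≠ λ_+ satisfies Re(λ) < λ_+ (the triple root λ_+ is dominant), so the closed-loop system is exponentially stable. -/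
/-!
Put `z = τ (λ - λ₊)` and `u = -λ₊ τ ∈ (0, 1)`. Since `λ₊ τ` solves `x² + 4x + a₀τ² + 2 = 0`,
`τ² Δ(λ) = z² - 2uz + (4u - 2) - ((4u - 2) + (2u - 2)z) e^{-z}`, and integrating by parts this is
`z² ∫₀¹ φ(t) (1 - e^{-zt}) dt` for the density `φ(t) = 2u + (2 - 4u)t`, positive on `[0, 1]`.
If `Re z ≥ 0` and `z ≠ 0`, the real part of the integrand is nonnegative and positive for small `t`,
so `Δ` has no root other than `λ₊` in `Re λ ≥ λ₊`. The gains `b₀, b₁` are what makes `Δ` and `Δ'`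
vanish at `λ₊`, and then `Δ''(λ₊) = 0` is the same quadratic equation.
-/

open Complex

lemma re_cexp_lt_one {w : ℂ} (hw : w ≠ 0) (hre : w.re ≤ 0) (hnorm : ‖w‖ < 2 * Real.pi) :
    (cexp w).re < 1 := by
  rw [exp_re]
  rcases hre.lt_or_eq with hneg | hzero
  · calc Real.exp w.re * Real.cos w.im ≤ Real.exp w.re :=
          mul_le_of_le_one_right (Real.exp_pos _).le (Real.cos_le_one _)
      _ < 1 := Real.exp_lt_one_iff.mpr hneg
  · have him : |w.im| < 2 * Real.pi := (abs_im_le_norm w).trans_lt hnorm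
    have hcos : Real.cos w.im ≠ 1 := by
      rw [Ne, Real.cos_eq_one_iff_of_lt_of_lt (neg_lt_of_abs_lt him) (lt_of_abs_lt him)]
      exact fun h => hw (Complex.ext hzero h)
    rw [hzero, Real.exp_zero, one_mul]
    exact (Real.cos_le_one _).lt_of_ne hcos

lemma integral_mul_one_sub_cexp_ne_zero {φ : ℝ → ℝ} (hφ : Continuous φ)
    (hpos : ∀ t ∈ Set.Icc (0 : ℝ) 1, 0 < φ t) {z : ℂ} (hz : z ≠ 0) (hre : 0 ≤ z.re) :
    ∫ t in (0 : ℝ)..1, (φ t : ℂ) * (1 - cexp (-z * t)) ≠ 0 := by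
  have hre_eq (t : ℝ) :
      ((φ t : ℂ) * (1 - cexp (-z * t))).re = φ t * (1 - (cexp (-z * t)).re) := by simp
  have hle (t : ℝ) (ht : 0 ≤ t) : (cexp (-z * t)).re ≤ 1 :=
    calc (cexp (-z * t)).re ≤ ‖cexp (-z * t)‖ := re_le_norm _
      _ = Real.exp (-(z.re * t)) := by simp [norm_exp]
      _ ≤ 1 := Real.exp_le_one_iff.mpr (neg_nonpos.mpr (mul_nonneg hre ht))
  -- before time `t₀` the phase of `exp (-z t)` has not yet turned once around the circle
  set t₀ : ℝ := 1 / (1 + ‖z‖)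
  have ht₀ : 0 < t₀ := by positivity
  have ht₀_le : t₀ ≤ 1 := div_le_one_of_le₀ (by linarith [norm_nonneg z]) (by positivity)
  have hlt : (cexp (-z * t₀)).re < 1 := by
    refine re_cexp_lt_one (by simp [hz, ht₀.ne']) (by simpa using mul_nonneg hre ht₀.le) ?_
    calc ‖-z * t₀‖ = ‖z‖ / (1 + ‖z‖) := by
          rw [norm_mul, norm_neg, norm_real, Real.norm_of_nonneg ht₀.le, mul_one_div]
      _ < 1 := (div_lt_one (by positivity)).mpr (by linarith)
      _ < 2 * Real.pi := by linarith [Real.pi_gt_three]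
  have hint : IntervalIntegrable (fun t : ℝ => (φ t : ℂ) * (1 - cexp (-z * t)))
      MeasureTheory.volume 0 1 :=
    Continuous.intervalIntegrable (by fun_prop) 0 1
  have hpos_re : 0 < (∫ t in (0 : ℝ)..1, (φ t : ℂ) * (1 - cexp (-z * t))).re := by
    rw [← RCLike.re_eq_complex_re, ← intervalIntegral.intervalIntegral_re hint]
    simp only [RCLike.re_eq_complex_re, hre_eq]
    refine intervalIntegral.integral_pos zero_lt_one (by fun_prop) ?_ ⟨t₀, ⟨ht₀.le, ht₀_le⟩, ?_⟩
    · exact fun t ht => mul_nonneg (hpos t ⟨ht.1.le, ht.2⟩).le (sub_nonneg.mpr (hle t ht.1.le))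
    · exact mul_pos (hpos t₀ ⟨ht₀.le, ht₀_le⟩) (sub_pos.mpr hlt)
  exact fun h => hpos_re.ne' (by rw [h, zero_re])

lemma sq_mul_integral_linear_mul_one_sub_cexp (a b : ℂ) {z : ℂ} (hz : z ≠ 0) :
    z ^ 2 * ∫ t in (0 : ℝ)..1, (a + b * t) * (1 - cexp (-z * t)) =
      z ^ 2 * (a + b / 2) - (a * z + b) + ((a + b) * z + b) * cexp (-z) := by
  set F : ℝ → ℂ := fun t => a * t + b * t ^ 2 / 2 + cexp (-z * t) * ((a + b * t) / z + b / z ^ 2)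
  have hF (t : ℝ) : HasDerivAt F ((a + b * t) * (1 - cexp (-z * t))) t := by
    have hlin : HasDerivAt (fun s : ℝ => (s : ℂ)) 1 t := ofRealCLM.hasDerivAt
    have hexp : HasDerivAt (fun s : ℝ => cexp (-z * s)) (cexp (-z * t) * (-z * 1)) t :=
      (hlin.const_mul (-z)).cexp
    have := ((hlin.const_mul a).add ((hlin.pow 2).const_mul b |>.div_const 2)).add
      (hexp.mul (((hlin.const_mul b).const_add a).div_const z |>.add_const (b / z ^ 2)))
    refine this.congr_deriv ?_
    field_simp
    ring
  rw [intervalIntegral.integral_eq_sub_of_hasDerivAt (fun t _ => hF t)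
    (Continuous.intervalIntegrable (by fun_prop) 0 1)]
  simp only [F]
  push_cast
  field_simp
  simp only [mul_zero, neg_zero, exp_zero, mul_one]
  ring

noncomputable def normalizedCharFun (u z : ℂ) : ℂ :=
  z ^ 2 - 2 * u * z + (4 * u - 2) - ((4 * u - 2) + (2 * u - 2) * z) * cexp (-z)

lemma normalizedCharFun_ne_zero {u : ℝ} (hu0 : 0 < u) (hu1 : u < 1) {z : ℂ} (hz : z ≠ 0)
    (hre : 0 ≤ z.re) : normalizedCharFun u z ≠ 0 := by
  have hφ : ∀ t ∈ Set.Icc (0 : ℝ) 1, 0 < 2 * u + (2 - 4 * u) * t := fun t ⟨ht0, ht1⟩ => by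
    nlinarith [mul_nonneg ht0 (sub_nonneg.mpr hu1.le), mul_nonneg (sub_nonneg.mpr ht1) hu0.le]
  have hG : normalizedCharFun u z =
      z ^ 2 * ∫ t in (0 : ℝ)..1, ((2 * u + (2 - 4 * u) * t : ℝ) : ℂ) * (1 - cexp (-z * t)) := by
    push_cast
    rw [sq_mul_integral_linear_mul_one_sub_cexp _ _ hz, normalizedCharFun]
    ring
  rw [hG]
  exact mul_ne_zero (pow_ne_zero 2 hz)
    (integral_mul_one_sub_cexp_ne_zero (by fun_prop) hφ hz hre)

noncomputable def pendulumCharFun (a b c τ w : ℂ) : ℂ :=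
  w ^ 2 + a + (b + c * w) * cexp (-w * τ)

lemma hasDerivAt_pendulumCharFun (a b c τ w : ℂ) :
    HasDerivAt (pendulumCharFun a b c τ) (2 * w + (c - τ * (b + c * w)) * cexp (-w * τ)) w := by
  have hexp : HasDerivAt (fun w => cexp (-w * τ)) (cexp (-w * τ) * (-1 * τ)) w :=
    ((hasDerivAt_id w).neg.mul_const τ).cexp
  have := ((hasDerivAt_pow 2 w).add_const a).add
    ((((hasDerivAt_id w).const_mul c).const_add b).mul hexp)
  refine this.congr_deriv ?_
  simp only [id]
  ring

lemma hasDerivAt_deriv_pendulumCharFun (a b c τ w : ℂ) :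
    HasDerivAt (deriv (pendulumCharFun a b c τ))
      (2 + (τ ^ 2 * (b + c * w) - 2 * τ * c) * cexp (-w * τ)) w := by
  have hexp : HasDerivAt (fun w => cexp (-w * τ)) (cexp (-w * τ) * (-1 * τ)) w :=
    ((hasDerivAt_id w).neg.mul_const τ).cexp
  have := ((hasDerivAt_id w).const_mul 2).add
    (((((hasDerivAt_id w).const_mul c).const_add b).const_mul τ).const_sub c |>.mul hexp)
  rw [funext fun w => (hasDerivAt_pendulumCharFun a b c τ w).deriv]
  refine this.congr_deriv ?_
  simp only [id]
  ring

lemma iteratedDeriv_pendulumCharFun_eq_zero {a b c τ w : ℂ}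
    (h₀ : pendulumCharFun a b c τ w = 0)
    (h₁ : 2 * w + (c - τ * (b + c * w)) * cexp (-w * τ) = 0)
    (h₂ : 2 + (τ ^ 2 * (b + c * w) - 2 * τ * c) * cexp (-w * τ) = 0) :
    ∀ j < 3, iteratedDeriv j (pendulumCharFun a b c τ) w = 0
  | 0, _ => by rwa [iteratedDeriv_zero]
  | 1, _ => by rwa [iteratedDeriv_one, (hasDerivAt_pendulumCharFun a b c τ w).deriv]
  | 2, _ => by
    rwa [iteratedDeriv_succ, iteratedDeriv_one, (hasDerivAt_deriv_pendulumCharFun a b c τ w).deriv]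

lemma iteratedDeriv_pendulumCharFun_eq_zero_of_quadratic {a b c τ ρ : ℂ}
    (hquad : τ ^ 2 * ρ ^ 2 + 4 * τ * ρ + a * τ ^ 2 + 2 = 0)
    (hb : b = cexp (ρ * τ) * (τ * ρ ^ 3 + ρ ^ 2 + a * τ * ρ - a))
    (hc : c = -cexp (ρ * τ) * (τ * ρ ^ 2 + 2 * ρ + a * τ)) :
    ∀ j < 3, iteratedDeriv j (pendulumCharFun a b c τ) ρ = 0 := by
  have hexp : cexp (ρ * τ) * cexp (-ρ * τ) = 1 := by
    rw [← Complex.exp_add, neg_mul, add_neg_cancel, exp_zero]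
  subst hb hc
  refine iteratedDeriv_pendulumCharFun_eq_zero ?_ ?_ ?_
  · unfold pendulumCharFun
    linear_combination (-(ρ ^ 2 + a)) * hexp
  · linear_combination (-2 * ρ) * hexp
  · linear_combination (-2) * hexp + cexp (ρ * τ) * cexp (-ρ * τ) * hquad

lemma sq_mul_pendulumCharFun {a b c τ ρ : ℂ}
    (hquad : τ ^ 2 * ρ ^ 2 + 4 * τ * ρ + a * τ ^ 2 + 2 = 0)
    (hb : b = cexp (ρ * τ) * (τ * ρ ^ 3 + ρ ^ 2 + a * τ * ρ - a))
    (hc : c = -cexp (ρ * τ) * (τ * ρ ^ 2 + 2 * ρ + a * τ)) (w : ℂ) :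
    τ ^ 2 * pendulumCharFun a b c τ w = normalizedCharFun (-(ρ * τ)) (τ * (w - ρ)) := by
  have hexp : cexp (ρ * τ) * cexp (-ρ * τ) = 1 := by
    rw [← Complex.exp_add, neg_mul, add_neg_cancel, exp_zero]
  have hsplit : cexp (-w * τ) = cexp (-ρ * τ) * cexp (-(τ * (w - ρ))) := by
    rw [← Complex.exp_add]; ring_nf
  unfold pendulumCharFun normalizedCharFun
  rw [hsplit]
  subst hb hc
  linear_combination (1 - (1 + τ * (w - ρ)) * cexp (-(τ * (w - ρ)))) * hquad +
    τ ^ 2 * ((τ * ρ ^ 3 + ρ ^ 2 + a * τ * ρ - a) - w * (τ * ρ ^ 2 + 2 * ρ + a * τ)) *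
      cexp (-(τ * (w - ρ))) * hexp

lemma pendulumCharFun_ne_zero {a b c : ℂ} {τ ρ : ℝ} (hτ : 0 < τ) (hρ : ρ * τ ∈ Set.Ioo (-1) 0)
    (hquad : (τ : ℂ) ^ 2 * ρ ^ 2 + 4 * τ * ρ + a * τ ^ 2 + 2 = 0)
    (hb : b = cexp (ρ * τ) * (τ * ρ ^ 3 + ρ ^ 2 + a * τ * ρ - a))
    (hc : c = -cexp (ρ * τ) * (τ * ρ ^ 2 + 2 * ρ + a * τ))
    {w : ℂ} (hw : w ≠ ρ) (hre : ρ ≤ w.re) : pendulumCharFun a b c τ w ≠ 0 := by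
  have hz : (τ : ℂ) * (w - ρ) ≠ 0 := mul_ne_zero (ofReal_ne_zero.mpr hτ.ne') (sub_ne_zero.mpr hw)
  have hzre : 0 ≤ ((τ : ℂ) * (w - ρ)).re := by
    simpa using mul_nonneg hτ.le (sub_nonneg.mpr hre)
  have hG := normalizedCharFun_ne_zero (u := -(ρ * τ)) (by linarith [hρ.2]) (by linarith [hρ.1])
    hz hzre
  push_cast at hG
  rw [← sq_mul_pendulumCharFun hquad hb hc] at hG
  exact right_ne_zero_of_mul hG

lemma root_mul_delay_mem_Ioo {a₀ τ ρ : ℝ} (ha₀ : a₀ < 0) (hτ₀ : 0 < τ) (hτ : τ < √(-2 / a₀))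
    (hρ : ρ = (-2 + √(2 - a₀ * τ ^ 2)) / τ) : ρ * τ ∈ Set.Ioo (-1) 0 := by
  have hτ2 : τ ^ 2 < -2 / a₀ := (Real.lt_sqrt hτ₀.le).mp hτ
  have hlow : 1 < 2 - a₀ * τ ^ 2 := by nlinarith [sq_nonneg τ]
  have hhigh : 2 - a₀ * τ ^ 2 < 4 := by
    have := (lt_div_iff_of_neg ha₀).mp hτ2
    linarith
  have hs1 : 1 < √(2 - a₀ * τ ^ 2) := Real.lt_sqrt_of_sq_lt (by linarith)
  have hs2 : √(2 - a₀ * τ ^ 2) < 2 := (Real.sqrt_lt' two_pos).mpr (by linarith)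
  rw [hρ, div_mul_cancel₀ _ hτ₀.ne']
  constructor <;> linarith

lemma quadratic_of_eq_root {a₀ τ ρ : ℝ} (hτ₀ : τ ≠ 0) (hdisc : 0 ≤ 2 - a₀ * τ ^ 2)
    (hρ : ρ = (-2 + √(2 - a₀ * τ ^ 2)) / τ) :
    τ ^ 2 * ρ ^ 2 + 4 * τ * ρ + a₀ * τ ^ 2 + 2 = 0 := by
  have hρτ : τ * ρ = -2 + √(2 - a₀ * τ ^ 2) := by rw [hρ]; field_simp
  linear_combination (τ * ρ + 2 + √(2 - a₀ * τ ^ 2)) * hρτ + Real.sq_sqrt hdisc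

/-- inverted pendulum with delayed PD control, dominant triple root:
for `a₀ < 0` and `0 < τ < √(-2/a₀)`, with `λ₊ = (-2 + √(2 - a₀τ²))/τ` and gains
`b₀ = e^{λ₊τ}(τλ₊³ + λ₊² + a₀τλ₊ - a₀)`, `b₁ = -e^{λ₊τ}(τλ₊² + 2λ₊ + a₀τ)`, the
quasipolynomial `Δ(λ) = λ² + a₀ + (b₀ + b₁λ)e^{-λτ}` has `λ₊ < 0` as a real root of
multiplicity at least 3, and every other root satisfies `Re(λ) < λ₊`. -/
theorem stmt_15 (a0 τ : ℝ) (ha0 : a0 < 0) (hτ0 : 0 < τ) (hτ : τ < Real.sqrt (-2 / a0))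
    (lamp b0 b1 : ℝ)
    (hlamp : lamp = (-2 + Real.sqrt (2 - a0 * τ ^ 2)) / τ)
    (hb0 : b0 = Real.exp (lamp * τ) * (τ * lamp ^ 3 + lamp ^ 2 + a0 * τ * lamp - a0))
    (hb1 : b1 = -Real.exp (lamp * τ) * (τ * lamp ^ 2 + 2 * lamp + a0 * τ))
    (Δ : ℂ → ℂ)
    (hΔ : ∀ lam : ℂ, Δ lam =
      lam ^ 2 + (a0 : ℂ) + ((b0 : ℂ) + (b1 : ℂ) * lam) * Complex.exp (-lam * (τ : ℂ))) :
    lamp < 0 ∧ (∀ j < 3, iteratedDeriv j Δ (lamp : ℂ) = 0) ∧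
    (∀ lam : ℂ, Δ lam = 0 → lam ≠ (lamp : ℂ) → lam.re < lamp) := by
  have hΔ' : Δ = pendulumCharFun a0 b0 b1 τ := funext hΔ
  have hρτ := root_mul_delay_mem_Ioo ha0 hτ0 hτ hlamp
  have hquad : (τ : ℂ) ^ 2 * lamp ^ 2 + 4 * τ * lamp + a0 * τ ^ 2 + 2 = 0 := by
    exact_mod_cast quadratic_of_eq_root hτ0.ne' (by nlinarith [sq_nonneg τ]) hlamp
  have hb0' : (b0 : ℂ) = cexp (lamp * τ) * (τ * lamp ^ 3 + lamp ^ 2 + a0 * τ * lamp - a0) := by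
    rw [hb0]; push_cast; rfl
  have hb1' : (b1 : ℂ) = -cexp (lamp * τ) * (τ * lamp ^ 2 + 2 * lamp + a0 * τ) := by
    rw [hb1]; push_cast; rfl
  refine ⟨neg_of_mul_neg_left hρτ.2 hτ0.le,
    hΔ' ▸ iteratedDeriv_pendulumCharFun_eq_zero_of_quadratic hquad hb0' hb1',
    fun lam hroot hne => ?_⟩
  by_contra! hge
  exact pendulumCharFun_ne_zero hτ0 hρτ hquad hb0' hb1' hne hge (hΔ' ▸ hroot)
end
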